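/- arXiv:2001.10957 — 7 statements merged into one kernel-verified Lean document; each statement's English description precedes it below -/
import Mathlib

section
/- Let g:[a,b]→[0,∞) be increasing and left-continuous, and let f be Lebesgue–Stieltjes integrable with respect to g on [a,b). Then the Lebesgue–Stieltjes integral of f over [a,b) equals the Kurzweil–Stieltjes integral ∫_a^b f dg. -/
/-!
A Bochner integrable function is McShane integrable, with the same integral, with respect to
any locally finite measure (`MeasureTheory.IntegrableOn.hasBoxIntegral`). McShane's gauge
condition controls the Riemann sums of all `δ`-fine divisions of `[a, b]` with tags anywhere in
`[a, b]`, whereas Kurzweil's only concerns divisions whose tags lie in their own intervals, so it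
is weaker. For the Lebesgue–Stieltjes measure of `g` the McShane sum
`∑ f (ξ i) μ [t i, t (i + 1))` is exactly the Riemann–Stieltjes sum
`∑ f (ξ i) (g (t (i + 1)) - g (t i))`.
-/

open Set MeasureTheory

/-- Right jump of a function: `u(t⁺) - u(t)`. -/
noncomputable def rjump (u : ℝ → ℝ) (t : ℝ) : ℝ := Function.rightLim u t - u t

/-- Cumulative jump part of `u` on `[a, t)`: `u^B(t) = Σ_{s ∈ [a,t)} Δ⁺u(s)`. -/
noncomputable def jumpPart (u : ℝ → ℝ) (a t : ℝ) : ℝ :=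
  ∑' s : ℝ, Set.indicator (Set.Ico a t) (fun v => rjump u v) s

/-- Continuous part of `u` (relative to the base point `a`): `u^C = u - u^B`. -/
noncomputable def contPart (u : ℝ → ℝ) (a t : ℝ) : ℝ := u t - jumpPart u a t

/-- `I` is the Kurzweil–Stieltjes integral `∫_a^b f dg`: for every `ε > 0` there is a
gauge `δ` such that every `δ`-fine tagged partition of `[a,b]` has Riemann–Stieltjes
sum within `ε` of `I`. -/
def IsKSIntegral (f g : ℝ → ℝ) (a b I : ℝ) : Prop :=
  ∀ ε > (0:ℝ), ∃ δ : ℝ → ℝ, (∀ x, 0 < δ x) ∧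
    ∀ (n : ℕ) (t ξ : ℕ → ℝ),
      t 0 = a → t n = b →
      (∀ i < n, t i < t (i + 1)) →
      (∀ i < n, t i ≤ ξ i ∧ ξ i ≤ t (i + 1)) →
      (∀ i < n, ξ i - δ (ξ i) < t i ∧ t (i + 1) < ξ i + δ (ξ i)) →
      |(∑ i ∈ Finset.range n, f (ξ i) * (g (t (i + 1)) - g (t i))) - I| < ε

/-- `f` is `g`-Lipschitz continuous on `[a,b]` with constant `H`. -/
def GLipschitzOn (f g : ℝ → ℝ) (H a b : ℝ) : Prop :=
  ∀ t ∈ Set.Icc a b, ∀ s ∈ Set.Icc a b, |f t - f s| ≤ H * |g t - g s|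

/-- `g` is left-continuous at every point of `s`. -/
def LeftContOn (g : ℝ → ℝ) (s : Set ℝ) : Prop :=
  ∀ t ∈ s, Filter.Tendsto g (nhdsWithin t (Set.Iio t)) (nhds (g t))

open BoxIntegral

/- Boxes in `Fin 1 → ℝ` are left-open, so `x ↦ -x` is used to carry `[c, d)` to the box
`(-d, -c]`. -/
def negFinOne : ℝ ≃ᵐ (Fin 1 → ℝ) :=
  (MeasurableEquiv.neg ℝ).trans (MeasurableEquiv.funUnique (Fin 1) ℝ).symm

@[simp]
lemma negFinOne_apply (x : ℝ) (k : Fin 1) : negFinOne x k = -x := rfl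

lemma dist_negFinOne (x y : ℝ) : dist (negFinOne x) (negFinOne y) = dist x y :=
  (dist_pi_const (-x) (-y)).trans (dist_neg_neg x y)

def icoBox {c d : ℝ} (h : c < d) : Box (Fin 1) :=
  ⟨fun _ => -d, fun _ => -c, fun _ => neg_lt_neg h⟩

section icoBox

variable {c d : ℝ} (h : c < d)

lemma negFinOne_mem_icoBox {x : ℝ} : negFinOne x ∈ icoBox h ↔ x ∈ Ico c d := by
  simp only [Box.mem_def, Fin.forall_fin_one, negFinOne_apply, icoBox, mem_Ioc, mem_Ico,
    neg_lt_neg_iff, neg_le_neg_iff, and_comm]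

lemma negFinOne_preimage_icoBox : negFinOne ⁻¹' icoBox h = Ico c d :=
  ext fun _ => negFinOne_mem_icoBox h

lemma negFinOne_mem_Icc_icoBox {x : ℝ} : negFinOne x ∈ Box.Icc (icoBox h) ↔ x ∈ Icc c d := by
  simp only [Box.Icc_def, mem_Icc, Pi.le_def, Fin.forall_fin_one, negFinOne_apply, icoBox,
    neg_le_neg_iff, and_comm]

lemma icoBox_le_icoBox {c' d' : ℝ} (h' : c' < d') (hc : c' ≤ c) (hd : d ≤ d') :
    icoBox h ≤ icoBox h' :=
  Box.le_iff_bounds.2 ⟨fun _ => neg_le_neg hd, fun _ => neg_le_neg hc⟩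

lemma disjoint_icoBox_iff {c' d' : ℝ} (h' : c' < d') :
    Disjoint (icoBox h : Set (Fin 1 → ℝ)) (icoBox h') ↔ Disjoint (Ico c d) (Ico c' d') := by
  rw [← negFinOne_preimage_icoBox h, ← negFinOne_preimage_icoBox h',
    disjoint_preimage_iff negFinOne.surjective]

end icoBox

section Division

variable {n : ℕ} {t : ℕ → ℝ}

lemma exists_lt_mem_Ico_add_one {x : ℝ} (hx : x ∈ Ico (t 0) (t n)) :
    ∃ i < n, x ∈ Ico (t i) (t (i + 1)) := by
  induction n with
  | zero => simp at hx
  | succ n ih =>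
    by_cases hxn : x < t n
    · obtain ⟨i, hi, hxi⟩ := ih ⟨hx.1, hxn⟩
      exact ⟨i, hi.trans n.lt_succ_self, hxi⟩
    · exact ⟨n, n.lt_succ_self, not_lt.1 hxn, hx.2⟩

lemma strictMonoOn_Iic_of_lt_add_one (ht : ∀ i < n, t i < t (i + 1)) :
    StrictMonoOn t (Iic n) :=
  strictMonoOn_Iic_of_lt_succ fun i hi => by simpa using ht i hi

lemma mem_Icc_of_lt_add_one (ht : ∀ i < n, t i < t (i + 1)) {i : ℕ} (hi : i ≤ n) :
    t i ∈ Icc (t 0) (t n) :=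
  have hmono := (strictMonoOn_Iic_of_lt_add_one ht).monotoneOn
  ⟨hmono (Nat.zero_le n) hi (Nat.zero_le i), hmono hi (mem_Iic.2 le_rfl) hi⟩

lemma pairwiseDisjoint_Ico_of_lt_add_one (ht : ∀ i < n, t i < t (i + 1)) :
    (Iio n).PairwiseDisjoint fun i => Ico (t i) (t (i + 1)) := by
  have hmono := (strictMonoOn_Iic_of_lt_add_one ht).monotoneOn
  have key : ∀ i j, i < j → j < n →
      Disjoint (Ico (t i) (t (i + 1))) (Ico (t j) (t (j + 1))) :=
    fun i j hij hj => Ico_disjoint_Ico_same.mono_right <|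
      Ico_subset_Ico_left (hmono (show i + 1 ≤ n by omega) hj.le hij)
  intro i hi j hj hij
  rcases hij.lt_or_gt with h | h
  exacts [key i j h hj, (key j i h hi).symm]

def divisionBox (ht : ∀ i < n, t i < t (i + 1)) (i : Fin n) : Box (Fin 1) :=
  icoBox (ht i i.2)

lemma divisionBox_injective (ht : ∀ i < n, t i < t (i + 1)) :
    Function.Injective (divisionBox ht) := by
  intro i j hij
  have hupper : -t i = -t j := congrFun (congrArg Box.upper hij) 0
  exact Fin.ext <| (strictMonoOn_Iic_of_lt_add_one ht).injOn i.2.le j.2.le (neg_inj.1 hupper)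

variable {a b : ℝ}

open Classical in
noncomputable def divisionPrepartition (hab : a < b) (ht0 : t 0 = a) (htn : t n = b)
    (ht : ∀ i < n, t i < t (i + 1)) : Prepartition (icoBox hab) where
  boxes := Finset.univ.image (divisionBox ht)
  le_of_mem' := by
    simp only [Finset.mem_image, Finset.mem_univ, true_and, forall_exists_index,
      forall_apply_eq_imp_iff]
    intro i
    subst ht0 htn
    exact icoBox_le_icoBox _ _ (mem_Icc_of_lt_add_one ht i.2.le).1
      (mem_Icc_of_lt_add_one ht i.2).2
  pairwiseDisjoint := by
    simp only [Finset.coe_image, Finset.coe_univ, image_univ]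
    rintro _ ⟨i, rfl⟩ _ ⟨j, rfl⟩ hne
    exact (disjoint_icoBox_iff _ _).2 <| pairwiseDisjoint_Ico_of_lt_add_one ht i.2 j.2
      fun h => hne (congrArg _ (Fin.ext h))

noncomputable def divisionTaggedPrepartition (hab : a < b) (ht0 : t 0 = a) (htn : t n = b)
    (ht : ∀ i < n, t i < t (i + 1)) (ξ : ℕ → ℝ) (hξ : ∀ i < n, ξ i ∈ Icc a b) :
    TaggedPrepartition (icoBox hab) where
  toPrepartition := divisionPrepartition hab ht0 htn ht
  tag J := negFinOne ((Function.partialInv (divisionBox ht) J).elim a fun i => ξ i)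
  tag_mem_Icc J := by
    rw [negFinOne_mem_Icc_icoBox]
    cases Function.partialInv (divisionBox ht) J with
    | none => exact left_mem_Icc.2 hab.le
    | some i => exact hξ i i.2

variable (hab : a < b) (ht0 : t 0 = a) (htn : t n = b) (ht : ∀ i < n, t i < t (i + 1))
  (ξ : ℕ → ℝ) (hξ : ∀ i < n, ξ i ∈ Icc a b)

lemma mem_divisionTaggedPrepartition {J : Box (Fin 1)} :
    J ∈ divisionTaggedPrepartition hab ht0 htn ht ξ hξ ↔ ∃ i, divisionBox ht i = J := by
  classical
  simp [divisionTaggedPrepartition, divisionPrepartition]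

lemma divisionTaggedPrepartition_tag (i : Fin n) :
    (divisionTaggedPrepartition hab ht0 htn ht ξ hξ).tag (divisionBox ht i) =
      negFinOne (ξ i) := by
  simp only [divisionTaggedPrepartition, Function.partialInv_left (divisionBox_injective ht),
    Option.elim_some]

lemma isPartition_divisionTaggedPrepartition :
    (divisionTaggedPrepartition hab ht0 htn ht ξ hξ).IsPartition := by
  intro y hy
  rw [← negFinOne.apply_symm_apply y, negFinOne_mem_icoBox, ← ht0, ← htn] at hy
  obtain ⟨i, hi, hyi⟩ := exists_lt_mem_Ico_add_one hy
  refine ⟨divisionBox ht ⟨i, hi⟩, (mem_divisionTaggedPrepartition ..).2 ⟨_, rfl⟩, ?_⟩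
  rwa [← negFinOne.apply_symm_apply y, divisionBox, negFinOne_mem_icoBox]

lemma isSubordinate_divisionTaggedPrepartition (r : (Fin 1 → ℝ) → Ioi (0 : ℝ))
    (hfine : ∀ i < n,
      ξ i - r (negFinOne (ξ i)) < t i ∧ t (i + 1) < ξ i + r (negFinOne (ξ i))) :
    (divisionTaggedPrepartition hab ht0 htn ht ξ hξ).IsSubordinate r := by
  intro _ hJ
  obtain ⟨i, rfl⟩ := (mem_divisionTaggedPrepartition ..).1 hJ
  rw [divisionTaggedPrepartition_tag]
  intro y hy
  rw [← negFinOne.apply_symm_apply y, divisionBox, negFinOne_mem_Icc_icoBox] at hy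
  rw [← negFinOne.apply_symm_apply y, Metric.mem_closedBall, dist_negFinOne, Real.dist_eq,
    abs_le]
  have := hfine i i.2
  constructor <;> linarith [hy.1, hy.2]

lemma integralSum_divisionTaggedPrepartition {E : Type*} [NormedAddCommGroup E]
    [NormedSpace ℝ E] (μ : Measure ℝ) [IsFiniteMeasure μ] (f : ℝ → E) :
    integralSum (f ∘ negFinOne.symm) (μ.map negFinOne).toBoxAdditive.toSMul
        (divisionTaggedPrepartition hab ht0 htn ht ξ hξ) =
      ∑ i ∈ Finset.range n, μ.real (Ico (t i) (t (i + 1))) • f (ξ i) := by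
  classical
  rw [integralSum, ← Fin.sum_univ_eq_sum_range]
  refine (Finset.sum_image fun i _ j _ h => divisionBox_injective ht h).trans
    (Finset.sum_congr rfl fun i _ => ?_)
  rw [divisionTaggedPrepartition_tag, BoxAdditiveMap.toSMul_apply, Measure.toBoxAdditive_apply,
    measureReal_def, measureReal_def, negFinOne.map_apply, divisionBox,
    negFinOne_preimage_icoBox, Function.comp_apply, MeasurableEquiv.symm_apply_apply]

end Division

/- McShane's integral on `[a, b)` against a measure: unlike in `IsKSIntegral`, the tag `ξ i` need
not lie in `[t i, t (i + 1)]`. -/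
def HasMcShaneIntegralIco {E : Type*} [NormedAddCommGroup E] [NormedSpace ℝ E] (f : ℝ → E)
    (μ : Measure ℝ) (a b : ℝ) (I : E) : Prop :=
  ∀ ε > (0 : ℝ), ∃ δ : ℝ → ℝ, (∀ x, 0 < δ x) ∧
    ∀ (n : ℕ) (t ξ : ℕ → ℝ), t 0 = a → t n = b → (∀ i < n, t i < t (i + 1)) →
      (∀ i < n, ξ i ∈ Icc a b) → (∀ i < n, ξ i - δ (ξ i) < t i ∧ t (i + 1) < ξ i + δ (ξ i)) →
      ‖∑ i ∈ Finset.range n, μ.real (Ico (t i) (t (i + 1))) • f (ξ i) - I‖ ≤ ε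

theorem MeasureTheory.IntegrableOn.hasMcShaneIntegralIco {E : Type*} [NormedAddCommGroup E]
    [NormedSpace ℝ E] [CompleteSpace E] {μ : Measure ℝ} [IsFiniteMeasure μ] {f : ℝ → E}
    {a b : ℝ} (hab : a < b) (hf : IntegrableOn f (Ico a b) μ) :
    HasMcShaneIntegralIco f μ a b (∫ x in Ico a b, f x ∂μ) := by
  have hbox : HasIntegral (icoBox hab) IntegrationParams.McShane (f ∘ negFinOne.symm)
      (μ.map negFinOne).toBoxAdditive.toSMul (∫ x in Ico a b, f x ∂μ) := by
    have hF : IntegrableOn (f ∘ negFinOne.symm) (icoBox hab) (μ.map negFinOne) := by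
      rwa [integrableOn_map_equiv, negFinOne_preimage_icoBox, Function.comp_assoc,
        negFinOne.symm_comp_self, Function.comp_id]
    convert hF.hasBoxIntegral IntegrationParams.McShane rfl using 1
    rw [negFinOne.measurableEmbedding.setIntegral_map, negFinOne_preimage_icoBox]
    simp only [Function.comp_apply, MeasurableEquiv.symm_apply_apply]
  intro ε hε
  obtain ⟨r, -, hr⟩ := hasIntegral_iff.1 hbox ε hε
  refine ⟨fun x => r 0 (negFinOne x), fun x => (r 0 (negFinOne x)).2, ?_⟩
  intro n t ξ ht0 htn ht hξ hfine
  have hbase : IntegrationParams.McShane.MemBaseSet (icoBox hab) 0 (r 0)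
      (divisionTaggedPrepartition hab ht0 htn ht ξ hξ) :=
    ⟨isSubordinate_divisionTaggedPrepartition hab ht0 htn ht ξ hξ _ hfine,
      fun h => absurd h Bool.false_ne_true, fun h => absurd h Bool.false_ne_true,
      fun h => absurd h Bool.false_ne_true⟩
  have := hr 0 _ hbase (isPartition_divisionTaggedPrepartition hab ht0 htn ht ξ hξ)
  rwa [integralSum_divisionTaggedPrepartition, dist_eq_norm] at this

theorem HasMcShaneIntegralIco.isKSIntegral {f g : ℝ → ℝ} {μ : Measure ℝ} {a b I : ℝ}
    (h : HasMcShaneIntegralIco f μ a b I)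
    (hμg : ∀ c d, a ≤ c → c ≤ d → d ≤ b → μ.real (Ico c d) = g d - g c) :
    IsKSIntegral f g a b I := by
  intro ε hε
  obtain ⟨δ, hδ, hsum⟩ := h (ε / 2) (half_pos hε)
  refine ⟨δ, hδ, fun n t ξ ht0 htn ht htag hfine => ?_⟩
  have ht_mem : ∀ i ≤ n, t i ∈ Icc a b := fun i hi =>
    ht0 ▸ htn ▸ mem_Icc_of_lt_add_one ht hi
  have hξ : ∀ i < n, ξ i ∈ Icc a b := fun i hi =>
    Icc_subset_Icc (ht_mem i hi.le).1 (ht_mem (i + 1) hi).2 (htag i hi)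
  have hsum_eq : ∑ i ∈ Finset.range n, f (ξ i) * (g (t (i + 1)) - g (t i)) =
      ∑ i ∈ Finset.range n, μ.real (Ico (t i) (t (i + 1))) • f (ξ i) :=
    Finset.sum_congr rfl fun i hi => by
      have hi := Finset.mem_range.1 hi
      rw [hμg _ _ (ht_mem i hi.le).1 (ht i hi).le (ht_mem (i + 1) hi).2, smul_eq_mul, mul_comm]
  rw [hsum_eq, ← Real.norm_eq_abs]
  exact (hsum n t ξ ht0 htn ht hξ hfine).trans_lt (half_lt_self hε)

theorem lebesgueStieltjes_eq_kurzweilStieltjes_general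
    (a b : ℝ) (hab : a < b) (g : ℝ → ℝ)
    (hg : MonotoneOn g (Set.Icc a b))
    (μ : Measure ℝ)
    (hμ : ∀ c d : ℝ, a ≤ c → c ≤ d → d ≤ b →
      μ (Set.Ico c d) = ENNReal.ofReal (g d - g c))
    (f : ℝ → ℝ) (hf : IntegrableOn f (Set.Ico a b) μ) :
    IsKSIntegral f g a b (∫ x in Set.Ico a b, f x ∂μ) := by
  have hμg : ∀ c d, a ≤ c → c ≤ d → d ≤ b →
      (μ.restrict (Ico a b)).real (Ico c d) = g d - g c := by
    intro c d hac hcd hdb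
    rw [measureReal_def, Measure.restrict_apply measurableSet_Ico,
      inter_eq_left.2 (Ico_subset_Ico hac hdb), hμ c d hac hcd hdb, ENNReal.toReal_ofReal
        (sub_nonneg.2 (hg ⟨hac, hcd.trans hdb⟩ ⟨hac.trans hcd, hdb⟩ hcd))]
  have : IsFiniteMeasure (μ.restrict (Ico a b)) := isFiniteMeasure_restrict.2 <| by
    rw [hμ a b le_rfl hab.le le_rfl]
    exact ENNReal.ofReal_ne_top
  have hf' : IntegrableOn f (Ico a b) (μ.restrict (Ico a b)) := by
    rwa [IntegrableOn, Measure.restrict_restrict measurableSet_Ico, inter_self]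
  simpa [Measure.restrict_restrict measurableSet_Ico] using
    (hf'.hasMcShaneIntegralIco hab).isKSIntegral hμg

/-- If `g : [a,b] → [0,∞)` is increasing and left-continuous, `μ` is its
Lebesgue–Stieltjes measure (`μ [c,d) = g d - g c`), and `f` is `μ`-integrable on `[a,b)`,
then the Lebesgue–Stieltjes integral of `f` over `[a,b)` equals the
Kurzweil–Stieltjes integral `∫_a^b f dg`. -/
theorem lebesgueStieltjes_eq_kurzweilStieltjes
    (a b : ℝ) (hab : a < b) (g : ℝ → ℝ)
    (hg : MonotoneOn g (Set.Icc a b))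
    (hg0 : ∀ t ∈ Set.Icc a b, 0 ≤ g t)
    (hglc : LeftContOn g (Set.Ioo a b))
    (μ : Measure ℝ)
    (hμ : ∀ c d : ℝ, a ≤ c → c ≤ d → d ≤ b →
      μ (Set.Ico c d) = ENNReal.ofReal (g d - g c))
    (f : ℝ → ℝ) (hf : IntegrableOn f (Set.Ico a b) μ) :
    IsKSIntegral f g a b (∫ x in Set.Ico a b, f x ∂μ) :=
  lebesgueStieltjes_eq_kurzweilStieltjes_general a b hab g hg μ hμ f hf
end

section
/- Let f ∈ BV([a,b]) and let G:[a,b]→ℝ be continuous, increasing, and p-H-Hölder, i.e., |G(x)−G(y)| ≤ H|x−y|^p for all x,y ∈ [a,b], with H>0 and p ∈ (0,1]. Then the one-point quadrature rule satisfies |f(a)(G(b)−G(a)) − ∫_a^b f dG| ≤ H (b−a)^p Var_a^b f. -/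
open Set

def FinePart (δ : ℝ → ℝ) (a x : ℝ) : Prop :=
  ∃ (n : ℕ) (t ξ : ℕ → ℝ),
    t 0 = a ∧ t n = x ∧
    (∀ i < n, t i < t (i + 1)) ∧
    (∀ i < n, t i ≤ ξ i ∧ ξ i ≤ t (i + 1)) ∧
    (∀ i < n, ξ i - δ (ξ i) < t i ∧ t (i + 1) < ξ i + δ (ξ i))

lemma FinePart.refl (δ : ℝ → ℝ) (a : ℝ) : FinePart δ a a :=
  ⟨0, fun _ => a, fun _ => a, rfl, rfl, by omega, by omega, by omega⟩

lemma FinePart.extend (δ : ℝ → ℝ) {a x y c : ℝ} (h : FinePart δ a x)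
    (hxy : x < y) (hxc : x ≤ c) (hcy : c ≤ y)
    (h1 : c - δ c < x) (h2 : y < c + δ c) : FinePart δ a y := by
  obtain ⟨n, t, ξ, ht0, htn, hinc, htag, hfine⟩ := h
  refine ⟨n + 1, fun i => if i ≤ n then t i else y, fun i => if i < n then ξ i else c,
    ?_, ?_, ?_, ?_, ?_⟩
  · simp [ht0]
  · simp
  · intro i hi
    rcases Nat.lt_succ_iff_lt_or_eq.mp hi with h' | h'
    · simp only [Nat.le_of_lt h', if_pos, Nat.succ_le_of_lt h']
      simpa using hinc i h'
    · subst h'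
      simp [htn, hxy]
  · intro i hi
    rcases Nat.lt_succ_iff_lt_or_eq.mp hi with h' | h'
    · simp only [h', if_pos, Nat.le_of_lt h', Nat.succ_le_of_lt h']
      exact htag i h'
    · subst h'
      simp [htn, hxc, hcy]
  · intro i hi
    rcases Nat.lt_succ_iff_lt_or_eq.mp hi with h' | h'
    · simp only [h', if_pos, Nat.le_of_lt h', Nat.succ_le_of_lt h']
      exact hfine i h'
    · subst h'
      simp [htn, h1, h2]

lemma cousin_lemma (δ : ℝ → ℝ) (hδ : ∀ x, 0 < δ x) (a b : ℝ) (hab : a ≤ b) :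
    FinePart δ a b := by
  set A : Set ℝ := {x | a ≤ x ∧ x ≤ b ∧ FinePart δ a x} with hA
  have haA : a ∈ A := ⟨le_refl a, hab, FinePart.refl δ a⟩
  have hne : A.Nonempty := ⟨a, haA⟩
  have hbdd : BddAbove A := ⟨b, fun x hx => hx.2.1⟩
  set c := sSup A with hc
  have hcb : c ≤ b := csSup_le hne (fun x hx => hx.2.1)
  have hac : a ≤ c := le_csSup hbdd haA
  obtain ⟨x, hxA, hxgt⟩ := exists_lt_of_lt_csSup hne (by linarith [hδ c] : c - δ c < c)
  have hxc : x ≤ c := le_csSup hbdd hxA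
  by_cases hxb : x = b
  · rw [← hxb]; exact hxA.2.2
  · have hxltb : x < b := lt_of_le_of_ne hxA.2.1 hxb
    set y := min b (c + δ c / 2) with hy
    have hcy : c ≤ y := le_min hcb (by linarith [hδ c])
    have hxy : x < y := lt_min hxltb (by linarith [hδ c])
    have hyA : y ∈ A := by
      refine ⟨le_trans hxA.1 (le_of_lt hxy), min_le_left _ _, ?_⟩
      exact FinePart.extend δ hxA.2.2 hxy hxc hcy hxgt
        (lt_of_le_of_lt (min_le_right _ _) (by linarith [hδ c]))
    have hyc : y ≤ c := le_csSup hbdd hyA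
    have hyb : y = b := by
      rcases min_cases b (c + δ c / 2) with ⟨h', _⟩ | ⟨h', _⟩
      · exact h'
      · exfalso; rw [hy] at hyc; rw [h'] at hyc; linarith [hδ c]
    rw [← hyb]; exact hyA.2.2

theorem onePoint_quadrature_error
    (a b H p : ℝ) (hab : a ≤ b) (hH : 0 < H) (hp0 : 0 < p) (hp1 : p ≤ 1)
    (f G : ℝ → ℝ)
    (hf : BoundedVariationOn f (Set.Icc a b))
    (hGc : ContinuousOn G (Set.Icc a b))
    (hGm : MonotoneOn G (Set.Icc a b))
    (hGh : ∀ x ∈ Set.Icc a b, ∀ y ∈ Set.Icc a b, |G x - G y| ≤ H * |x - y| ^ p)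
    (I : ℝ) (hI : IsKSIntegral f G a b I) :
    |f a * (G b - G a) - I| ≤ H * (b - a) ^ p * (eVariationOn f (Set.Icc a b)).toReal := by
  set V := (eVariationOn f (Set.Icc a b)).toReal with hVdef
  have hVnn : 0 ≤ V := ENNReal.toReal_nonneg
  have haI : a ∈ Set.Icc a b := ⟨le_refl a, hab⟩
  have hbI : b ∈ Set.Icc a b := ⟨hab, le_refl b⟩
  have hVb : ∀ x ∈ Set.Icc a b, |f x - f a| ≤ V := by
    intro x hx
    have h1 : edist (f x) (f a) ≤ eVariationOn f (Set.Icc a b) :=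
      eVariationOn.edist_le f hx haI
    have h2 : (edist (f x) (f a)).toReal ≤ V :=
      ENNReal.toReal_mono hf h1
    rwa [edist_dist, ENNReal.toReal_ofReal dist_nonneg, Real.dist_eq] at h2
  have hGba : G b - G a ≤ H * (b - a) ^ p := by
    have := hGh b hbI a haI
    have habs : |b - a| = b - a := abs_of_nonneg (by linarith)
    rw [habs] at this
    exact le_trans (le_abs_self _) this
  have key : ∀ ε > (0:ℝ), |f a * (G b - G a) - I| ≤ H * (b - a) ^ p * V + ε := by
    intro ε hε
    obtain ⟨δ, hδpos, hδ⟩ := hI ε hε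
    obtain ⟨n, t, ξ, ht0, htn, hinc, htag, hfine⟩ := cousin_lemma δ hδpos a b hab
    have hsum := hδ n t ξ ht0 htn hinc htag hfine
    have mono : ∀ j, j ≤ n → ∀ i, i ≤ j → t i ≤ t j := by
      intro j
      induction j with
      | zero => intro _ i hi; rw [Nat.le_zero.mp hi]
      | succ k ih =>
        intro hk i hi
        rcases Nat.lt_succ_iff_lt_or_eq.mp (Nat.lt_succ_of_le hi) with h' | h'
        · exact le_trans (ih (by omega) i (by omega))
            (le_of_lt (hinc k (by omega)))
        · rw [h']
    have htmem : ∀ i ≤ n, t i ∈ Set.Icc a b := by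
      intro i hi
      constructor
      · rw [← ht0]; exact mono i hi 0 (Nat.zero_le i)
      · rw [← htn]; exact mono n (le_refl n) i hi
    have hξmem : ∀ i < n, ξ i ∈ Set.Icc a b := by
      intro i hi
      constructor
      · exact le_trans (htmem i (le_of_lt hi)).1 (htag i hi).1
      · exact le_trans (htag i hi).2 (htmem (i + 1) hi).2
    have tele : ∑ i ∈ Finset.range n, (G (t (i + 1)) - G (t i)) = G b - G a := by
      rw [Finset.sum_range_sub (fun i => G (t i)), ht0, htn]
    have hΔnn : ∀ i < n, 0 ≤ G (t (i + 1)) - G (t i) := by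
      intro i hi
      have := hGm (htmem i (le_of_lt hi)) (htmem (i + 1) hi)
        (le_of_lt (hinc i hi))
      linarith
    have h1 : |(∑ i ∈ Finset.range n, f (ξ i) * (G (t (i + 1)) - G (t i)))
        - f a * (G b - G a)| ≤ H * (b - a) ^ p * V := by
      have heq : (∑ i ∈ Finset.range n, f (ξ i) * (G (t (i + 1)) - G (t i)))
          - f a * (G b - G a)
          = ∑ i ∈ Finset.range n, (f (ξ i) - f a) * (G (t (i + 1)) - G (t i)) := by
        rw [← tele, Finset.mul_sum, ← Finset.sum_sub_distrib]
        exact Finset.sum_congr rfl (fun i _ => by ring)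
      rw [heq]
      calc |∑ i ∈ Finset.range n, (f (ξ i) - f a) * (G (t (i + 1)) - G (t i))|
          ≤ ∑ i ∈ Finset.range n, |(f (ξ i) - f a) * (G (t (i + 1)) - G (t i))| :=
            Finset.abs_sum_le_sum_abs _ _
        _ ≤ ∑ i ∈ Finset.range n, V * (G (t (i + 1)) - G (t i)) := by
            refine Finset.sum_le_sum (fun i hi => ?_)
            have hi' := Finset.mem_range.mp hi
            rw [abs_mul, abs_of_nonneg (hΔnn i hi')]
            exact mul_le_mul_of_nonneg_right (hVb _ (hξmem i hi')) (hΔnn i hi')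
        _ = V * (G b - G a) := by rw [← Finset.mul_sum, tele]
        _ ≤ V * (H * (b - a) ^ p) := mul_le_mul_of_nonneg_left hGba hVnn
        _ = H * (b - a) ^ p * V := by ring
    calc |f a * (G b - G a) - I|
        ≤ |f a * (G b - G a)
            - (∑ i ∈ Finset.range n, f (ξ i) * (G (t (i + 1)) - G (t i)))|
          + |(∑ i ∈ Finset.range n, f (ξ i) * (G (t (i + 1)) - G (t i))) - I| :=
          abs_sub_le _ _ _
      _ ≤ H * (b - a) ^ p * V + ε :=
          add_le_add (by rw [abs_sub_comm]; exact h1) (le_of_lt hsum)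
  exact le_of_forall_pos_le_add key
end

section
/- Let f ∈ BV([a,b]) and let G:[a,b]→ℝ be continuous, increasing, and p-H-Hölder with constant H>0 and exponent p ∈ (0,1]. Then the trapezoidal quadrature rule satisfies |((f(a)+f(b))/2)(G(b)−G(a)) − ∫_a^b f dG| ≤ H ((b−a)/2)^p Var_a^b f. -/
/-! Put `m = (G a + G b) / 2`. Summation by parts rewrites the trapezoid value minus a
Riemann–Stieltjes sum `∑ f(ξᵢ) (G tᵢ₊₁ - G tᵢ)` as
`∑ (f tᵢ₊₁ - f ξᵢ) (G tᵢ₊₁ - m) + (f ξᵢ - f tᵢ) (G tᵢ - m)`. Since `G` is increasing,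
`|G - m| ≤ (G b - G a) / 2 ≤ H (b - a)^p / 2 ≤ H ((b - a) / 2)^p` on `[a, b]` (as `2^p ≤ 2`),
while the increments of `f` along the chain `t₀ ≤ ξ₀ ≤ t₁ ≤ ξ₁ ≤ ⋯` add up to at most
`Var f`. Cousin's lemma supplies gauge-fine tagged partitions, so the bound passes from the
sums to the integral. -/

open Set

open Finset

theorem monotone_comp_min_of_le_succ {α : Type*} [Preorder α] {t : ℕ → α} {n : ℕ}
    (ht : ∀ i < n, t i ≤ t (i + 1)) : Monotone fun i => t (min i n) :=
  monotone_nat_of_le_succ fun i => by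
    rcases lt_or_ge i n with h | h
    · rw [min_eq_left h.le, min_eq_left h]; exact ht i h
    · rw [min_eq_right h, min_eq_right (by omega)]

theorem mem_Icc_of_le_succ {α : Type*} [Preorder α] {t : ℕ → α} {n : ℕ}
    (ht : ∀ i < n, t i ≤ t (i + 1)) {i : ℕ} (hi : i ≤ n) : t i ∈ Icc (t 0) (t n) := by
  have hm := monotone_comp_min_of_le_succ ht
  simpa [min_eq_left hi] using And.intro (hm i.zero_le) (hm hi)

theorem eVariationOn_sum_Icc {α E : Type*} [LinearOrder α] [PseudoEMetricSpace E] (f : α → E)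
    {t : ℕ → α} {n : ℕ} (ht : ∀ i < n, t i ≤ t (i + 1)) :
    ∑ i ∈ range n, eVariationOn f (Icc (t i) (t (i + 1))) =
      eVariationOn f (Icc (t 0) (t n)) := by
  have h := eVariationOn.sum f (s := univ) (monotone_comp_min_of_le_succ ht) (n := n)
    fun _ _ _ => mem_univ _
  simp only [univ_inter, min_self, Nat.zero_min] at h
  rw [← h]
  refine sum_congr rfl fun i hi => ?_
  rw [min_eq_left (Finset.mem_range.mp hi).le, min_eq_left (Finset.mem_range.mp hi)]

theorem sum_edist_tag_le_eVariationOn {α E : Type*} [LinearOrder α] [PseudoEMetricSpace E]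
    (f : α → E) {t ξ : ℕ → α} {n : ℕ} (htag : ∀ i < n, t i ≤ ξ i ∧ ξ i ≤ t (i + 1)) :
    ∑ i ∈ range n, (edist (f (t (i + 1))) (f (ξ i)) + edist (f (ξ i)) (f (t i))) ≤
      eVariationOn f (Icc (t 0) (t n)) := by
  rw [← eVariationOn_sum_Icc f fun i hi => (htag i hi).1.trans (htag i hi).2]
  refine sum_le_sum fun i hi => ?_
  obtain ⟨hti, hξi⟩ := htag i (Finset.mem_range.mp hi)
  have hsplit := eVariationOn.Icc_add_Icc f (s := univ) hti hξi (mem_univ _)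
  simp only [univ_inter] at hsplit
  rw [← hsplit, add_comm]
  gcongr
  · exact eVariationOn.edist_le f ⟨hti, le_rfl⟩ ⟨le_rfl, hti⟩
  · exact eVariationOn.edist_le f ⟨hξi, le_rfl⟩ ⟨le_rfl, hξi⟩

theorem sum_abs_sub_tag_le_eVariationOn_toReal {f : ℝ → ℝ} {t ξ : ℕ → ℝ} {n : ℕ}
    (hf : BoundedVariationOn f (Icc (t 0) (t n)))
    (htag : ∀ i < n, t i ≤ ξ i ∧ ξ i ≤ t (i + 1)) :
    ∑ i ∈ range n, (|f (t (i + 1)) - f (ξ i)| + |f (ξ i) - f (t i)|) ≤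
      (eVariationOn f (Icc (t 0) (t n))).toReal := by
  rw [← ENNReal.ofReal_le_iff_le_toReal hf,
    ENNReal.ofReal_sum_of_nonneg fun _ _ => by positivity]
  simpa only [ENNReal.ofReal_add (abs_nonneg _) (abs_nonneg _), edist_dist, Real.dist_eq] using
    sum_edist_tag_le_eVariationOn f htag

theorem abs_sub_midpoint_le_of_monotoneOn {G : ℝ → ℝ} {a b x : ℝ}
    (hG : MonotoneOn G (Icc a b)) (hx : x ∈ Icc a b) :
    |G x - (G a + G b) / 2| ≤ (G b - G a) / 2 := by
  have hGax := hG ⟨le_rfl, hx.1.trans hx.2⟩ hx hx.1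
  have hGxb := hG hx ⟨hx.1.trans hx.2, le_rfl⟩ hx.2
  rw [abs_le]; constructor <;> linarith

theorem Real.rpow_div_two_le_div_two_rpow {x p : ℝ} (hx : 0 ≤ x) (hp : p ≤ 1) :
    x ^ p / 2 ≤ (x / 2) ^ p := by
  rw [Real.div_rpow hx zero_le_two]
  gcongr
  simpa using Real.rpow_le_rpow_of_exponent_le one_le_two hp

theorem abs_sub_midpoint_le_of_monotoneOn_of_holder {G : ℝ → ℝ} {a b H p x : ℝ} (hab : a ≤ b)
    (hH : 0 ≤ H) (hp : p ≤ 1) (hGm : MonotoneOn G (Icc a b))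
    (hGh : |G b - G a| ≤ H * |b - a| ^ p) (hx : x ∈ Icc a b) :
    |G x - (G a + G b) / 2| ≤ H * ((b - a) / 2) ^ p := by
  rw [abs_of_nonneg (sub_nonneg.2 hab)] at hGh
  calc _ ≤ (G b - G a) / 2 := abs_sub_midpoint_le_of_monotoneOn hGm hx
    _ ≤ H * (b - a) ^ p / 2 := by linarith [le_abs_self (G b - G a)]
    _ ≤ H * ((b - a) / 2) ^ p := by
      rw [mul_div_assoc]
      gcongr
      exact Real.rpow_div_two_le_div_two_rpow (sub_nonneg.2 hab) hp

def stieltjesSum (f g : ℝ → ℝ) (n : ℕ) (t ξ : ℕ → ℝ) : ℝ :=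
  ∑ i ∈ range n, f (ξ i) * (g (t (i + 1)) - g (t i))

theorem sub_stieltjesSum_eq_sum (f G : ℝ → ℝ) (m : ℝ) (n : ℕ) (t ξ : ℕ → ℝ) :
    f (t n) * (G (t n) - m) - f (t 0) * (G (t 0) - m) - stieltjesSum f G n t ξ =
      ∑ i ∈ range n, ((f (t (i + 1)) - f (ξ i)) * (G (t (i + 1)) - m) +
        (f (ξ i) - f (t i)) * (G (t i) - m)) := by
  induction n with
  | zero => simp [stieltjesSum]
  | succ n ih =>
    rw [sum_range_succ, ← ih, stieltjesSum, stieltjesSum, sum_range_succ]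
    ring

theorem abs_trapezoid_sub_stieltjesSum_le {f G : ℝ → ℝ} {n : ℕ} {t ξ : ℕ → ℝ} {M : ℝ}
    (hG : ∀ i ≤ n, |G (t i) - (G (t 0) + G (t n)) / 2| ≤ M) :
    |(f (t 0) + f (t n)) / 2 * (G (t n) - G (t 0)) - stieltjesSum f G n t ξ| ≤
      M * ∑ i ∈ range n, (|f (t (i + 1)) - f (ξ i)| + |f (ξ i) - f (t i)|) := by
  set m := (G (t 0) + G (t n)) / 2
  have htrap : (f (t 0) + f (t n)) / 2 * (G (t n) - G (t 0)) =
      f (t n) * (G (t n) - m) - f (t 0) * (G (t 0) - m) := by ring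
  rw [htrap, sub_stieltjesSum_eq_sum, mul_sum]
  refine (abs_sum_le_sum_abs _ _).trans (sum_le_sum fun i hi => ?_)
  have hi := Finset.mem_range.mp hi
  calc _ ≤ |f (t (i + 1)) - f (ξ i)| * |G (t (i + 1)) - m| +
          |f (ξ i) - f (t i)| * |G (t i) - m| := by
        rw [← abs_mul, ← abs_mul]; exact abs_add_le _ _
    _ ≤ |f (t (i + 1)) - f (ξ i)| * M + |f (ξ i) - f (t i)| * M := by
        gcongr
        exacts [hG (i + 1) hi, hG i hi.le]
    _ = M * (|f (t (i + 1)) - f (ξ i)| + |f (ξ i) - f (t i)|) := by ring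

theorem abs_trapezoid_sub_stieltjesSum_le_eVariationOn {f G : ℝ → ℝ} {n : ℕ} {t ξ : ℕ → ℝ}
    {M : ℝ} (hf : BoundedVariationOn f (Icc (t 0) (t n)))
    (htag : ∀ i < n, t i ≤ ξ i ∧ ξ i ≤ t (i + 1))
    (hG : ∀ i ≤ n, |G (t i) - (G (t 0) + G (t n)) / 2| ≤ M) :
    |(f (t 0) + f (t n)) / 2 * (G (t n) - G (t 0)) - stieltjesSum f G n t ξ| ≤
      M * (eVariationOn f (Icc (t 0) (t n))).toReal :=
  (abs_trapezoid_sub_stieltjesSum_le hG).trans <| mul_le_mul_of_nonneg_left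
    (sum_abs_sub_tag_le_eVariationOn_toReal hf htag) ((abs_nonneg _).trans (hG 0 n.zero_le))

structure IsFineTaggedPartition (δ : ℝ → ℝ) (a b : ℝ) (n : ℕ) (t ξ : ℕ → ℝ) : Prop where
  first : t 0 = a
  last : t n = b
  lt_succ : ∀ i < n, t i < t (i + 1)
  tag_mem : ∀ i < n, t i ≤ ξ i ∧ ξ i ≤ t (i + 1)
  fine : ∀ i < n, ξ i - δ (ξ i) < t i ∧ t (i + 1) < ξ i + δ (ξ i)

theorem IsFineTaggedPartition.mem_Icc {δ : ℝ → ℝ} {a b : ℝ} {n : ℕ} {t ξ : ℕ → ℝ}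
    (hP : IsFineTaggedPartition δ a b n t ξ) {i : ℕ} (hi : i ≤ n) : t i ∈ Icc a b :=
  hP.first ▸ hP.last ▸ mem_Icc_of_le_succ (fun j hj => (hP.lt_succ j hj).le) hi

theorem forall_lt_succ_update {R : ℝ → ℝ → ℝ → Prop} {n : ℕ} {t ξ : ℕ → ℝ} {y c : ℝ}
    (h : ∀ i < n, R (t i) (t (i + 1)) (ξ i)) (hlast : R (t n) y c) :
    ∀ i < n + 1, R (Function.update t (n + 1) y i) (Function.update t (n + 1) y (i + 1))
      (Function.update ξ n c i) := by
  intro i hi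
  rcases (Nat.lt_succ_iff.mp hi).lt_or_eq with hi | rfl
  · rw [Function.update_of_ne (by omega), Function.update_of_ne (by omega),
      Function.update_of_ne hi.ne]
    exact h i hi
  · rw [Function.update_of_ne (by omega), Function.update_self, Function.update_self]
    exact hlast

theorem IsFineTaggedPartition.snoc {δ : ℝ → ℝ} {a x y c : ℝ} {n : ℕ} {t ξ : ℕ → ℝ}
    (hP : IsFineTaggedPartition δ a x n t ξ) (hxy : x < y) (hc : c ∈ Icc x y)
    (hδ : c - δ c < x ∧ y < c + δ c) :
    IsFineTaggedPartition δ a y (n + 1) (Function.update t (n + 1) y)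
      (Function.update ξ n c) where
  first := by rw [Function.update_of_ne (by omega), hP.first]
  last := Function.update_self ..
  lt_succ := forall_lt_succ_update (R := fun u v _ => u < v) (ξ := ξ) (c := c) hP.lt_succ
    (hP.last ▸ hxy)
  tag_mem := forall_lt_succ_update (R := fun u v w => u ≤ w ∧ w ≤ v) hP.tag_mem (hP.last ▸ hc)
  fine := forall_lt_succ_update (R := fun u v w => w - δ w < u ∧ v < w + δ w) hP.fine
    (hP.last ▸ hδ)

/-- Cousin's lemma. -/
theorem exists_isFineTaggedPartition {δ : ℝ → ℝ} (hδ : ∀ x, 0 < δ x) {a b : ℝ} (hab : a ≤ b) :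
    ∃ n t ξ, IsFineTaggedPartition δ a b n t ξ := by
  set A := {x | x ≤ b ∧ ∃ n t ξ, IsFineTaggedPartition δ a x n t ξ}
  have haA : a ∈ A := ⟨hab, 0, fun _ => a, fun _ => a, rfl, rfl, by simp, by simp, by simp⟩
  obtain ⟨c, hc⟩ : ∃ c, IsLUB A c := ⟨sSup A, isLUB_csSup ⟨a, haA⟩ ⟨b, fun _ hx => hx.1⟩⟩
  have hcb : c ≤ b := hc.2 fun _ hx => hx.1
  have hcA : ∃ n t ξ, IsFineTaggedPartition δ a c n t ξ := by
    obtain ⟨x, ⟨-, n, t, ξ, hP⟩, hx, hxc⟩ := hc.exists_between (sub_lt_self c (hδ c))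
    rcases hxc.lt_or_eq with hxc | rfl
    · exact ⟨_, _, _, hP.snoc hxc ⟨hxc.le, le_rfl⟩ ⟨hx, lt_add_of_pos_right c (hδ c)⟩⟩
    · exact ⟨n, t, ξ, hP⟩
  obtain hcb | rfl := hcb.lt_or_eq
  · obtain ⟨n, t, ξ, hP⟩ := hcA
    set y := min b (c + δ c / 2)
    have hcy : c < y := lt_min hcb (by linarith [hδ c])
    have hyA : y ∈ A := ⟨min_le_left _ _, _, _, _, hP.snoc hcy ⟨le_rfl, hcy.le⟩
      ⟨sub_lt_self c (hδ c), (min_le_right _ _).trans_lt (by linarith [hδ c])⟩⟩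
    exact absurd (hc.1 hyA) hcy.not_ge
  · exact hcA

theorem trapezoidal_quadrature_error_general
    (a b H p : ℝ) (hab : a ≤ b) (hH : 0 < H) (hp1 : p ≤ 1)
    (f G : ℝ → ℝ)
    (hf : BoundedVariationOn f (Set.Icc a b))
    (hGm : MonotoneOn G (Set.Icc a b))
    (hGh : ∀ x ∈ Set.Icc a b, ∀ y ∈ Set.Icc a b, |G x - G y| ≤ H * |x - y| ^ p)
    (I : ℝ) (hI : IsKSIntegral f G a b I) :
    |(f a + f b) / 2 * (G b - G a) - I| ≤
      H * ((b - a) / 2) ^ p * (eVariationOn f (Set.Icc a b)).toReal := by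
  have hGmid : ∀ x ∈ Icc a b, |G x - (G a + G b) / 2| ≤ H * ((b - a) / 2) ^ p :=
    fun _ => abs_sub_midpoint_le_of_monotoneOn_of_holder hab hH.le hp1 hGm
      (hGh b ⟨hab, le_rfl⟩ a ⟨le_rfl, hab⟩)
  refine le_of_forall_pos_lt_add fun ε hε => ?_
  obtain ⟨δ, hδ, hfine⟩ := hI ε hε
  obtain ⟨n, t, ξ, hP⟩ := exists_isFineTaggedPartition hδ hab
  have hS : |stieltjesSum f G n t ξ - I| < ε :=
    hfine n t ξ hP.first hP.last hP.lt_succ hP.tag_mem hP.fine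
  obtain ⟨rfl, rfl⟩ := And.intro hP.first hP.last
  have hE := abs_trapezoid_sub_stieltjesSum_le_eVariationOn hf hP.tag_mem
    fun i hi => hGmid (t i) (hP.mem_Icc hi)
  calc _ ≤ _ := abs_sub_le _ (stieltjesSum f G n t ξ) I
    _ < _ := add_lt_add_of_le_of_lt hE hS

/-- Trapezoidal quadrature rule for a Riemann–Stieltjes integral with a
continuous, increasing, `p`-`H`-Hölder integrator `G` and `f` of bounded variation:
`|((f(a)+f(b))/2)(G(b) - G(a)) - ∫_a^b f dG| ≤ H ((b-a)/2)^p Var_a^b f`. -/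
theorem trapezoidal_quadrature_error
    (a b H p : ℝ) (hab : a ≤ b) (hH : 0 < H) (hp0 : 0 < p) (hp1 : p ≤ 1)
    (f G : ℝ → ℝ)
    (hf : BoundedVariationOn f (Set.Icc a b))
    (hGc : ContinuousOn G (Set.Icc a b))
    (hGm : MonotoneOn G (Set.Icc a b))
    (hGh : ∀ x ∈ Set.Icc a b, ∀ y ∈ Set.Icc a b, |G x - G y| ≤ H * |x - y| ^ p)
    (I : ℝ) (hI : IsKSIntegral f G a b I) :
    |(f a + f b) / 2 * (G b - G a) - I| ≤
      H * ((b - a) / 2) ^ p * (eVariationOn f (Set.Icc a b)).toReal :=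
  trapezoidal_quadrature_error_general a b H p hab hH hp1 f G hf hGm hGh I hI
end

section
/- Let g:[a,b]→ℝ be left-continuous on (a,b) and increasing, and let f:[a,b]→ℝ be g-Lipschitz continuous with constant H. Then the jump part f^B of f is g^B-Lipschitz continuous with constant H, i.e., |f^B(t)−f^B(s)| ≤ H|g^B(t)−g^B(s)| for all t,s ∈ [a,b]. -/
open Set

/-!
On `[a, b)` the right jumps satisfy `|Δ⁺f(v)| ≤ H Δ⁺g(v)`: by the McShane extension `f` factors
through `g` as `φ ∘ g` with `φ` Lipschitz, so `f` has right limits wherever `g` does, and the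
`g`-Lipschitz bound passes to the limit. Since `g` is monotone, its jumps in `[a, b)` sum to at
most `g b - g a`, so both jump series converge absolutely, and `f^B(t) - f^B(s)` is the sum of
the jumps of `f` in `[s, t)`.
-/

open Filter Topology Function

section RightJumps

variable {g : ℝ → ℝ} {a b v : ℝ}

theorem MonotoneOn.tendsto_rightLim_of_mem_Ico (hg : MonotoneOn g (Icc a b)) (hv : v ∈ Ico a b) :
    Tendsto g (𝓝[>] v) (𝓝 (rightLim g v)) := by
  have hbdd : BddBelow (g '' Ioo v b) := by
    refine ⟨g v, ?_⟩
    rintro _ ⟨x, hx, rfl⟩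
    exact hg ⟨hv.1, hv.2.le⟩ ⟨hv.1.trans hx.1.le, hx.2.le⟩ hx.1.le
  exact tendsto_rightLim_of_tendsto ⟨_, MonotoneOn.tendsto_nhdsWithin_Ioo_right
    (nonempty_Ioo.2 hv.2) (hg.mono (Ioo_subset_Icc_self.trans (Icc_subset_Icc hv.1 le_rfl))) hbdd⟩

theorem MonotoneOn.le_rightLim_of_mem_Ico (hg : MonotoneOn g (Icc a b)) (hv : v ∈ Ico a b) :
    g v ≤ rightLim g v :=
  ge_of_tendsto (hg.tendsto_rightLim_of_mem_Ico hv) <|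
    eventually_of_mem (Ioo_mem_nhdsGT hv.2) fun _ hx =>
      hg ⟨hv.1, hv.2.le⟩ ⟨hv.1.trans hx.1.le, hx.2.le⟩ hx.1.le

theorem MonotoneOn.rightLim_le_of_lt (hg : MonotoneOn g (Icc a b)) (hv : a ≤ v) {c : ℝ}
    (hvc : v < c) (hc : c ≤ b) : rightLim g v ≤ g c :=
  le_of_tendsto (hg.tendsto_rightLim_of_mem_Ico ⟨hv, hvc.trans_le hc⟩) <|
    eventually_of_mem (Ioo_mem_nhdsGT hvc) fun _ hx =>
      hg ⟨hv.trans hx.1.le, hx.2.le.trans hc⟩ ⟨hv.trans hvc.le, hc⟩ hx.2.le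

theorem MonotoneOn.rjump_nonneg (hg : MonotoneOn g (Icc a b)) (hv : v ∈ Ico a b) :
    0 ≤ rjump g v :=
  sub_nonneg.2 (hg.le_rightLim_of_mem_Ico hv)

theorem MonotoneOn.sum_rjump_le (hg : MonotoneOn g (Icc a b)) (hab : a ≤ b) (S : Finset ℝ)
    (hS : ∀ v ∈ S, v ∈ Ico a b) : ∑ v ∈ S, rjump g v ≤ g b - g a := by
  induction S using Finset.induction_on_max generalizing b with
  | empty => simpa using hg ⟨le_rfl, hab⟩ ⟨hab, le_rfl⟩ hab
  | insert m S hlt ih =>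
    have hm := hS m (Finset.mem_insert_self m S)
    rw [Finset.sum_insert fun h => lt_irrefl m (hlt m h)]
    have hsum : ∑ v ∈ S, rjump g v ≤ g m - g a :=
      ih (hg.mono (Icc_subset_Icc le_rfl hm.2.le)) hm.1
        fun v hv => ⟨(hS v (Finset.mem_insert_of_mem hv)).1, hlt v hv⟩
    have hjump : rightLim g m ≤ g b := hg.rightLim_le_of_lt hm.1 hm.2 le_rfl
    rw [rjump]
    linarith

theorem MonotoneOn.summable_indicator_rjump (hg : MonotoneOn g (Icc a b)) (hab : a ≤ b)
    {I : Set ℝ} (hI : I ⊆ Ico a b) : Summable (I.indicator (rjump g)) := by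
  classical
  refine summable_of_sum_le (c := g b - g a)
    (fun v => indicator_nonneg (fun v hv => hg.rjump_nonneg (hI hv)) v) fun S => ?_
  rw [Finset.sum_indicator_eq_sum_filter]
  exact hg.sum_rjump_le hab _ fun v hv => hI (Finset.mem_filter.1 hv).2

end RightJumps

section GLipschitz

variable {f g : ℝ → ℝ} {H a b v : ℝ}

theorem GLipschitzOn.exists_lipschitzWith_eqOn_comp (hf : GLipschitzOn f g H a b) :
    ∃ φ : ℝ → ℝ, LipschitzWith H.toNNReal φ ∧ EqOn f (φ ∘ g) (Icc a b) := by
  have hfactor : ∀ x ∈ Icc a b, ∀ y ∈ Icc a b, g x = g y → f x = f y := fun x hx y hy hxy => by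
    have := hf x hx y hy
    rw [hxy, sub_self, abs_zero, mul_zero] at this
    exact sub_eq_zero.1 (abs_nonpos_iff.1 this)
  set φ₀ : ℝ → ℝ := f ∘ invFunOn g (Icc a b)
  have hφ₀ : ∀ x ∈ Icc a b, φ₀ (g x) = f x := fun x hx =>
    hfactor _ (invFunOn_mem ⟨x, hx, rfl⟩) x hx (invFunOn_eq ⟨x, hx, rfl⟩)
  have hlip : LipschitzOnWith H.toNNReal φ₀ (g '' Icc a b) := by
    refine LipschitzOnWith.of_dist_le_mul ?_
    rintro _ ⟨x, hx, rfl⟩ _ ⟨y, hy, rfl⟩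
    rw [hφ₀ x hx, hφ₀ y hy, Real.dist_eq, Real.dist_eq]
    exact (hf x hx y hy).trans (mul_le_mul_of_nonneg_right (le_max_left H 0) (abs_nonneg _))
  obtain ⟨φ, hφ, hφeq⟩ := hlip.extend_real
  exact ⟨φ, hφ, fun x hx => by rw [comp_apply, ← hφeq (mem_image_of_mem g hx), hφ₀ x hx]⟩

theorem GLipschitzOn.tendsto_rightLim (hf : GLipschitzOn f g H a b)
    (hg : MonotoneOn g (Icc a b)) (hv : v ∈ Ico a b) :
    Tendsto f (𝓝[>] v) (𝓝 (rightLim f v)) := by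
  obtain ⟨φ, hφ, hfφ⟩ := hf.exists_lipschitzWith_eqOn_comp
  refine tendsto_rightLim_of_tendsto ⟨φ (rightLim g v), ?_⟩
  refine ((hφ.continuous.tendsto _).comp (hg.tendsto_rightLim_of_mem_Ico hv)).congr' ?_
  exact eventually_of_mem (Ioo_mem_nhdsGT hv.2) fun x hx =>
    (hfφ ⟨hv.1.trans hx.1.le, hx.2.le⟩).symm

theorem GLipschitzOn.abs_rjump_le (hf : GLipschitzOn f g H a b)
    (hg : MonotoneOn g (Icc a b)) (hv : v ∈ Ico a b) :
    |rjump f v| ≤ H * rjump g v := by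
  have hvI : v ∈ Icc a b := ⟨hv.1, hv.2.le⟩
  refine le_of_tendsto_of_tendsto (((hf.tendsto_rightLim hg hv).sub_const (f v)).abs)
    (((hg.tendsto_rightLim_of_mem_Ico hv).sub_const (g v)).const_mul H) ?_
  refine eventually_of_mem (Ioo_mem_nhdsGT hv.2) fun x hx => ?_
  have hxI : x ∈ Icc a b := ⟨hv.1.trans hx.1.le, hx.2.le⟩
  have := hf x hxI v hvI
  rwa [abs_of_nonneg (sub_nonneg.2 (hg hvI hxI hx.1.le))] at this

theorem GLipschitzOn.norm_indicator_rjump_le (hf : GLipschitzOn f g H a b)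
    (hg : MonotoneOn g (Icc a b)) {I : Set ℝ} (hI : I ⊆ Ico a b) (v : ℝ) :
    ‖I.indicator (rjump f) v‖ ≤ H * I.indicator (rjump g) v := by
  rw [Real.norm_eq_abs]
  by_cases hv : v ∈ I
  · simpa only [indicator_of_mem hv] using hf.abs_rjump_le hg (hI hv)
  · simp only [indicator_of_notMem hv, abs_zero, mul_zero, le_refl]

theorem GLipschitzOn.summable_indicator_rjump (hf : GLipschitzOn f g H a b)
    (hg : MonotoneOn g (Icc a b)) (hab : a ≤ b) {I : Set ℝ} (hI : I ⊆ Ico a b) :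
    Summable (I.indicator (rjump f)) :=
  ((hg.summable_indicator_rjump hab hI).mul_left H).of_norm_bounded
    (hf.norm_indicator_rjump_le hg hI)

end GLipschitz

theorem jumpPart_sub_jumpPart {u : ℝ → ℝ} {a s t : ℝ} (has : a ≤ s) (hst : s ≤ t)
    (h₁ : Summable ((Ico a s).indicator (rjump u)))
    (h₂ : Summable ((Ico s t).indicator (rjump u))) :
    jumpPart u a t - jumpPart u a s = ∑' v, (Ico s t).indicator (rjump u) v := by
  rw [sub_eq_iff_eq_add', jumpPart, jumpPart, ← h₁.tsum_add h₂, ← Ico_union_Ico_eq_Ico has hst,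
    indicator_union_of_disjoint Ico_disjoint_Ico_same]

theorem jumpPart_gLipschitz_general
    (a b H : ℝ) (g f : ℝ → ℝ)
    (hg : MonotoneOn g (Set.Icc a b))
    (hf : GLipschitzOn f g H a b) :
    ∀ t ∈ Set.Icc a b, ∀ s ∈ Set.Icc a b,
      |jumpPart f a t - jumpPart f a s| ≤ H * |jumpPart g a t - jumpPart g a s| := by
  intro t ht s hs
  wlog hst : s ≤ t generalizing s t
  · rw [abs_sub_comm (jumpPart f a t), abs_sub_comm (jumpPart g a t)]
    exact this s hs t ht (le_of_not_ge hst)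
  have hab : a ≤ b := ht.1.trans ht.2
  have hsub₁ : Ico a s ⊆ Ico a b := Ico_subset_Ico le_rfl hs.2
  have hsub₂ : Ico s t ⊆ Ico a b := Ico_subset_Ico hs.1 ht.2
  rw [jumpPart_sub_jumpPart hs.1 hst (hf.summable_indicator_rjump hg hab hsub₁)
      (hf.summable_indicator_rjump hg hab hsub₂),
    jumpPart_sub_jumpPart hs.1 hst (hg.summable_indicator_rjump hab hsub₁)
      (hg.summable_indicator_rjump hab hsub₂),
    abs_of_nonneg (tsum_nonneg (indicator_nonneg fun v hv => hg.rjump_nonneg (hsub₂ hv))),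
    ← tsum_mul_left]
  exact tsum_of_norm_bounded ((hg.summable_indicator_rjump hab hsub₂).mul_left H).hasSum
    (hf.norm_indicator_rjump_le hg hsub₂)

/-- If `g : [a,b] → ℝ` is left-continuous on `(a,b)` and increasing and
`f` is `g`-Lipschitz with constant `H`, then the jump part `f^B` is `g^B`-Lipschitz with
constant `H`. -/
theorem jumpPart_gLipschitz
    (a b H : ℝ) (hab : a ≤ b) (g f : ℝ → ℝ)
    (hg : MonotoneOn g (Set.Icc a b))
    (hglc : LeftContOn g (Set.Ioo a b))
    (hf : GLipschitzOn f g H a b) :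
    ∀ t ∈ Set.Icc a b, ∀ s ∈ Set.Icc a b,
      |jumpPart f a t - jumpPart f a s| ≤ H * |jumpPart g a t - jumpPart g a s| :=
  jumpPart_gLipschitz_general a b H g f hg hf
end

section
/- Let g:[a,b]→ℝ be left-continuous on (a,b) and increasing, and let f:[a,b]→ℝ be increasing and g-Lipschitz continuous with constant H. Then the continuous part f^C of f is g^C-Lipschitz continuous with constant H: |f^C(t)−f^C(s)| ≤ H|g^C(t)−g^C(s)| for all t,s ∈ [a,b]. -/
open Set

/-!
For monotone `f` and `g`, `g`-Lipschitz continuity with constant `H` just says that `H g - f` is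
monotone. On `[a,b]` the continuous part is linear in monotone functions and preserves
monotonicity, because the right jumps of a monotone function on `[s,t)` sum to at most its
increment `u t - u s`. Hence `H g^C - f^C = (H g - f)^C` is monotone, and `f^C`, `g^C` are
monotone, which is the claim.
-/

open Filter Topology Function

variable {u f g : ℝ → ℝ} {a b c s t x : ℝ}

lemma jumpPart_add_jumpPart {r : ℝ} (hsr : s ≤ r) (hrt : r ≤ t)
    (h₁ : Summable ((Ico s r).indicator (rjump u)))
    (h₂ : Summable ((Ico r t).indicator (rjump u))) :
    jumpPart u s r + jumpPart u r t = jumpPart u s t := by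
  unfold jumpPart
  rw [← h₁.tsum_add h₂, ← Ico_union_Ico_eq_Ico hsr hrt,
    indicator_union_of_disjoint Ico_disjoint_Ico_same]

lemma rjump_const_mul_sub (hg : Tendsto g (𝓝[>] x) (𝓝 (rightLim g x)))
    (hf : Tendsto f (𝓝[>] x) (𝓝 (rightLim f x))) :
    rjump (fun y => c * g y - f y) x = c * rjump g x - rjump f x := by
  unfold rjump
  rw [rightLim_eq_of_tendsto ((hg.const_mul c).sub hf)]
  ring

lemma jumpPart_const_mul_sub (hg : Summable ((Ico s t).indicator (rjump g)))
    (hf : Summable ((Ico s t).indicator (rjump f)))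
    (hjump : ∀ x ∈ Ico s t, rjump (fun y => c * g y - f y) x = c * rjump g x - rjump f x) :
    jumpPart (fun y => c * g y - f y) s t = c * jumpPart g s t - jumpPart f s t := by
  unfold jumpPart
  rw [← tsum_mul_left, ← (hg.mul_left c).tsum_sub hf]
  congr 1 with x
  by_cases hx : x ∈ Ico s t
  · simp only [indicator_of_mem hx, hjump x hx]
  · simp only [indicator_of_notMem hx, mul_zero, sub_zero]

namespace MonotoneOn

lemma exists_monotone_eqOn_Icc (hu : MonotoneOn u (Icc a b)) :
    ∃ U : ℝ → ℝ, Monotone U ∧ EqOn u U (Icc a b) :=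
  hu.exists_monotone_extension (bddBelow_Icc.mono hu.image_Icc_subset)
    (bddAbove_Icc.mono hu.image_Icc_subset)

lemma tendsto_rightLim (hu : MonotoneOn u (Icc a b)) (hx : x ∈ Ico a b) :
    Tendsto u (𝓝[>] x) (𝓝 (rightLim u x)) := by
  obtain ⟨U, hU, huU⟩ := hu.exists_monotone_eqOn_Icc
  have hUu : U =ᶠ[𝓝[>] x] u := by
    filter_upwards [Ioc_mem_nhdsGT hx.2] with y hy
    exact (huU ⟨hx.1.trans hy.1.le, hy.2⟩).symm
  have hlim := (hU.tendsto_rightLim x).congr' hUu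
  rwa [rightLim_eq_of_tendsto hlim]

lemma le_rightLim (hu : MonotoneOn u (Icc a b)) (hx : x ∈ Ico a b) : u x ≤ rightLim u x := by
  refine ge_of_tendsto (hu.tendsto_rightLim hx) ?_
  filter_upwards [Ioc_mem_nhdsGT hx.2] with y hy
  exact hu ⟨hx.1, hx.2.le⟩ ⟨hx.1.trans hy.1.le, hy.2⟩ hy.1.le

lemma rightLim_le (hu : MonotoneOn u (Icc a b)) {y : ℝ} (hx : a ≤ x) (hxy : x < y)
    (hy : y ≤ b) : rightLim u x ≤ u y := by
  refine le_of_tendsto (hu.tendsto_rightLim ⟨hx, hxy.trans_le hy⟩) ?_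
  filter_upwards [Ioo_mem_nhdsGT hxy] with z hz
  exact hu ⟨hx.trans hz.1.le, hz.2.le.trans hy⟩ ⟨hx.trans hxy.le, hy⟩ hz.2.le

lemma sum_rjump_le_s10 (hu : MonotoneOn u (Icc a b)) (F : Finset ℝ) (has : a ≤ s) (hst : s ≤ t)
    (htb : t ≤ b) (hF : ∀ x ∈ F, x ∈ Ico s t) : ∑ x ∈ F, rjump u x ≤ u t - u s := by
  induction F using Finset.induction_on_max generalizing t with
  | empty => simpa using hu ⟨has, hst.trans htb⟩ ⟨has.trans hst, htb⟩ hst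
  | insert m F hmax ih =>
    have hm : m ∈ Ico s t := hF m (Finset.mem_insert_self m F)
    have hsum : ∑ x ∈ F, rjump u x ≤ u m - u s :=
      ih hm.1 (hm.2.le.trans htb) fun x hx =>
        ⟨(hF x (Finset.mem_insert_of_mem hx)).1, hmax x hx⟩
    have hjump : rjump u m ≤ u t - u m :=
      sub_le_sub_right (hu.rightLim_le (has.trans hm.1) hm.2 htb) _
    rw [Finset.sum_insert fun h => (hmax m h).false]
    linarith

lemma sum_indicator_rjump_le (hu : MonotoneOn u (Icc a b)) (G : Finset ℝ) (has : a ≤ s)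
    (hst : s ≤ t) (htb : t ≤ b) :
    ∑ x ∈ G, (Ico s t).indicator (rjump u) x ≤ u t - u s := by
  classical
  rw [Finset.sum_indicator_eq_sum_filter]
  exact hu.sum_rjump_le_s10 _ has hst htb fun x hx => (Finset.mem_filter.1 hx).2

lemma summable_indicator_rjump_s10 (hu : MonotoneOn u (Icc a b)) (has : a ≤ s) (hst : s ≤ t)
    (htb : t ≤ b) :
    Summable ((Ico s t).indicator (rjump u)) := by
  refine summable_of_sum_le (fun x => ?_) (hu.sum_indicator_rjump_le · has hst htb)
  refine indicator_nonneg (fun y hy => ?_) x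
  exact sub_nonneg.2 (hu.le_rightLim ⟨has.trans hy.1, hy.2.trans_le htb⟩)

lemma jumpPart_le (hu : MonotoneOn u (Icc a b)) (has : a ≤ s) (hst : s ≤ t) (htb : t ≤ b) :
    jumpPart u s t ≤ u t - u s :=
  (hu.summable_indicator_rjump_s10 has hst htb).tsum_le_of_sum_le
    (hu.sum_indicator_rjump_le · has hst htb)

lemma monotoneOn_contPart (hu : MonotoneOn u (Icc a b)) :
    MonotoneOn (contPart u a) (Icc a b) := by
  intro s hs t ht hst
  have hsplit : jumpPart u a s + jumpPart u s t = jumpPart u a t :=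
    jumpPart_add_jumpPart hs.1 hst (hu.summable_indicator_rjump_s10 le_rfl hs.1 hs.2)
      (hu.summable_indicator_rjump_s10 hs.1 hst ht.2)
  have hle := hu.jumpPart_le hs.1 hst ht.2
  unfold contPart
  linarith

end MonotoneOn

lemma contPart_const_mul_sub (hg : MonotoneOn g (Icc a b)) (hf : MonotoneOn f (Icc a b))
    (ht : t ∈ Icc a b) :
    contPart (fun y => c * g y - f y) a t = c * contPart g a t - contPart f a t := by
  have hjump := jumpPart_const_mul_sub (c := c) (hg.summable_indicator_rjump_s10 le_rfl ht.1 ht.2)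
    (hf.summable_indicator_rjump_s10 le_rfl ht.1 ht.2) fun x hx =>
      rjump_const_mul_sub (hg.tendsto_rightLim ⟨hx.1, hx.2.trans_le ht.2⟩)
        (hf.tendsto_rightLim ⟨hx.1, hx.2.trans_le ht.2⟩)
  unfold contPart
  rw [hjump]
  ring

lemma GLipschitzOn.monotoneOn_const_mul_sub {H : ℝ} (hf : GLipschitzOn f g H a b)
    (hg : MonotoneOn g (Icc a b)) : MonotoneOn (fun y => H * g y - f y) (Icc a b) := by
  intro x hx y hy hxy
  have hlip := (le_abs_self _).trans (hf y hy x hx)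
  rw [abs_of_nonneg (sub_nonneg.2 (hg hx hy hxy))] at hlip
  dsimp only
  linarith

lemma gLipschitzOn_of_monotoneOn_const_mul_sub {H : ℝ} (hf : MonotoneOn f (Icc a b))
    (hg : MonotoneOn g (Icc a b)) (hfg : MonotoneOn (fun y => H * g y - f y) (Icc a b)) :
    GLipschitzOn f g H a b := by
  intro t ht s hs
  wlog hst : s ≤ t generalizing s t
  · rw [abs_sub_comm, abs_sub_comm (g t)]
    exact this s hs t ht (le_of_not_ge hst)
  rw [abs_of_nonneg (sub_nonneg.2 (hf hs ht hst)), abs_of_nonneg (sub_nonneg.2 (hg hs ht hst))]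
  have hmono := hfg hs ht hst
  dsimp only at hmono
  linarith

theorem contPart_gLipschitz_of_monotone_general
    (a b H : ℝ) (g f : ℝ → ℝ)
    (hg : MonotoneOn g (Set.Icc a b))
    (hfm : MonotoneOn f (Set.Icc a b))
    (hf : GLipschitzOn f g H a b) :
    ∀ t ∈ Set.Icc a b, ∀ s ∈ Set.Icc a b,
      |contPart f a t - contPart f a s| ≤ H * |contPart g a t - contPart g a s| :=
  gLipschitzOn_of_monotoneOn_const_mul_sub hfm.monotoneOn_contPart hg.monotoneOn_contPart <|
    (hf.monotoneOn_const_mul_sub hg).monotoneOn_contPart.congr fun _ ht =>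
      contPart_const_mul_sub hg hfm ht

/-- If `g : [a,b] → ℝ` is left-continuous on `(a,b)` and increasing and
`f` is increasing and `g`-Lipschitz with constant `H`, then the continuous part `f^C` is
`g^C`-Lipschitz with constant `H`. -/
theorem contPart_gLipschitz_of_monotone
    (a b H : ℝ) (hab : a ≤ b) (g f : ℝ → ℝ)
    (hg : MonotoneOn g (Set.Icc a b))
    (hglc : LeftContOn g (Set.Ioo a b))
    (hfm : MonotoneOn f (Set.Icc a b))
    (hf : GLipschitzOn f g H a b) :
    ∀ t ∈ Set.Icc a b, ∀ s ∈ Set.Icc a b,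
      |contPart f a t - contPart f a s| ≤ H * |contPart g a t - contPart g a s| :=
  contPart_gLipschitz_of_monotone_general a b H g f hg hfm hf
end

section
/- Let g:[a,b]→ℝ be left-continuous and increasing, f:[a,b]→ℝ g-Lipschitz with constant H, and assume f^C and g^C are Lipschitz with constant H. Then the one-point corrected rule satisfies: |f^C(a)(g^C(b)−g^C(a)) + Σ_{s∈[a,b)}[f(s)Δ⁺g(s) + Δ⁺f(s)(g^C(b)−g^C(s))] − ∫_{[a,b)} f dμ_g| ≤ H²(b−a)². -/
open Set MeasureTheory

/-!
Let `D` be the set of atoms of `μ` in `[a, b)` and `S = [a, b) \ D`. Since `μ` is the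
Lebesgue–Stieltjes measure of `g`, `μ {s} = Δ⁺g(s)`, so `D` is the (countable) set of jumps of `g`,
and `μ` restricted to `S` is the Stieltjes measure of `g^C`: `g^C(b) - g^C(s) = μ([s, b) \ D)`.
The atoms contribute `∑ f(s) Δ⁺g(s)` to `∫_{[a,b)} f dμ`, and by Fubini
`∑ Δ⁺f(s) (g^C(b) - g^C(s)) = ∫_S f^B dμ` with `f^B = f - f^C`. Hence the error of the rule is
`∫_S (f^C(a) - f^C(t)) dμ(t)`, bounded by `H (b - a) μ(S) = H (b - a) (g^C(b) - g^C(a))`,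
and `g^C(b) - g^C(a) ≤ H (b - a)`.
-/

open Filter Function Topology

section Measure

variable {α : Type*} [MeasurableSpace α]

theorem countable_setOf_measure_singleton_ne_zero [MeasurableSingletonClass α] (ν : Measure α)
    [SFinite ν] : {x | ν {x} ≠ 0}.Countable := by
  simpa [pos_iff_ne_zero] using Measure.countable_meas_pos_of_disjoint_iUnion (μ := ν)
    (As := fun x : α => ({x} : Set α)) (fun x => measurableSet_singleton x)
    (fun x y hxy => disjoint_singleton.2 hxy)

def atomsOn (μ : Measure α) (A : Set α) : Set α :=
  {x ∈ A | μ {x} ≠ 0}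

theorem countable_atomsOn [MeasurableSingletonClass α] {μ : Measure α} {A : Set α}
    (hA : μ A ≠ ⊤) : (atomsOn μ A).Countable := by
  have := isFiniteMeasure_restrict.2 hA
  refine (countable_setOf_measure_singleton_ne_zero (μ.restrict A)).mono fun x hx => ?_
  rw [mem_ofPred_eq, Measure.restrict_apply (measurableSet_singleton x),
    singleton_inter_of_mem hx.1]
  exact hx.2

theorem mem_atomsOn_of_measureReal_ne_zero {μ : Measure α} {A : Set α} {x : α} (hx : x ∈ A)
    (h : μ.real {x} ≠ 0) : x ∈ atomsOn μ A :=
  ⟨hx, fun h0 => h (by rw [measureReal_def, h0, ENNReal.toReal_zero])⟩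

theorem hasSum_setIntegral_of_countable {E : Type*} [NormedAddCommGroup E] [NormedSpace ℝ E]
    [CompleteSpace E] [MeasurableSingletonClass α] {ν : Measure α} {f : α → E} {D : Set α}
    (hD : D.Countable) (hf : IntegrableOn f D ν) :
    HasSum (fun x : D => ν.real {(x : α)} • f x) (∫ x in D, f x ∂ν) := by
  have := hD.to_subtype
  have hU : (⋃ x : D, ({(x : α)} : Set α)) = D := iUnion_of_singleton_coe D
  have h := hasSum_integral_iUnion (μ := ν) (f := f) (s := fun x : D => ({(x : α)} : Set α))
    (fun _ => measurableSet_singleton _)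
    (fun x y hxy => disjoint_singleton.2 (Subtype.coe_injective.ne hxy)) (by rwa [hU])
  rw [hU] at h
  convert h using 2 with x
  exact (integral_singleton f x).symm

theorem hasSum_measureReal_singleton [MeasurableSingletonClass α] {ν : Measure α} {D : Set α}
    (hD : D.Countable) (hfin : ν D ≠ ⊤) :
    HasSum (fun x : D => ν.real {(x : α)}) (ν.real D) := by
  simpa using hasSum_setIntegral_of_countable hD (integrableOn_const hfin (C := (1 : ℝ)))

theorem hasSum_integral_tsum_indicator_const {ι : Type*} [Countable ι] {ν : Measure α}
    [IsFiniteMeasure ν] {A : ι → Set α} (hA : ∀ i, MeasurableSet (A i)) {c : ι → ℝ}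
    (hc : Summable c) :
    HasSum (fun i => c i * ν.real (A i)) (∫ x, ∑' i, (A i).indicator (fun _ => c i) x ∂ν) := by
  have hint : ∀ i, ∫ x, (A i).indicator (fun _ => c i) x ∂ν = c i * ν.real (A i) := fun i => by
    rw [integral_indicator_const _ (hA i), smul_eq_mul, mul_comm]
  have hnorm : ∀ i, ∫ x, ‖(A i).indicator (fun _ => c i) x‖ ∂ν = |c i| * ν.real (A i) := by
    intro i
    simp_rw [norm_indicator_eq_indicator_norm, integral_indicator_const _ (hA i),
      Real.norm_eq_abs, smul_eq_mul, mul_comm]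
  have hsum : Summable fun i => ∫ x, ‖(A i).indicator (fun _ => c i) x‖ ∂ν := by
    refine Summable.of_nonneg_of_le (fun i => integral_nonneg fun _ => norm_nonneg _)
      (fun i => ?_) (hc.abs.mul_right (ν.real univ))
    rw [hnorm]
    exact mul_le_mul_of_nonneg_left (measureReal_mono (subset_univ _)) (abs_nonneg _)
  simpa only [hint] using hasSum_integral_of_summable_integral_norm
    (fun i => (integrable_const (μ := ν) (c i)).indicator (hA i)) hsum

end Measure

theorem tendsto_measure_Ico_nhdsGT {μ : Measure ℝ} {s d : ℝ} (hsd : s < d)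
    (hd : μ (Ico s d) ≠ ⊤) : Tendsto (fun r => μ (Ico s r)) (𝓝[>] s) (𝓝 (μ {s})) := by
  have h : (⋂ r > s, Ico s r) = {s} := by
    ext x
    simp only [mem_iInter, mem_Ico, mem_singleton_iff]
    refine ⟨fun hx => le_antisymm ?_ (hx d hsd).1, fun hx r hr => ⟨hx.ge, hx ▸ hr⟩⟩
    exact le_of_forall_gt fun r hr => (hx r hr).2
  rw [← h]
  exact tendsto_measure_biInter_gt (fun r _ => nullMeasurableSet_Ico)
    (fun i j _ hij => Ico_subset_Ico_right hij) ⟨d, hsd, hd⟩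

theorem abs_rjump_le_of_eventually_le {f g : ℝ → ℝ} {s H : ℝ} (hH : 0 ≤ H)
    (hg : Tendsto g (𝓝[>] s) (𝓝 (rightLim g s)))
    (hfg : ∀ᶠ x in 𝓝[>] s, |f x - f s| ≤ H * |g x - g s|) :
    |rjump f s| ≤ H * |rjump g s| := by
  by_cases hf : ∃ y, Tendsto f (𝓝[>] s) (𝓝 y)
  · obtain ⟨y, hy⟩ := hf
    rw [rjump, rjump, rightLim_eq_of_tendsto hy]
    exact le_of_tendsto_of_tendsto ((hy.sub_const _).abs)
      (((hg.sub_const _).abs).const_mul H) hfg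
  · -- without a right limit, `rightLim f s` defaults to `f s`
    rw [rjump, rightLim_eq_of_not_tendsto f hf, sub_self, abs_zero]
    positivity

def IsStieltjesMeasureOn (μ : Measure ℝ) (g : ℝ → ℝ) (a b : ℝ) : Prop :=
  ∀ c d : ℝ, a ≤ c → c ≤ d → d ≤ b → μ (Ico c d) = ENNReal.ofReal (g d - g c)

namespace IsStieltjesMeasureOn

variable {μ : Measure ℝ} {g : ℝ → ℝ} {a b c d s t : ℝ}

theorem measure_Ico_ne_top (hμ : IsStieltjesMeasureOn μ g a b) : μ (Ico a b) ≠ ⊤ := by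
  rcases le_or_gt a b with hab | hba
  · rw [hμ a b le_rfl hab le_rfl]
    exact ENNReal.ofReal_ne_top
  · simp [Ico_eq_empty_of_le hba.le]

theorem measure_ne_top_of_subset (hμ : IsStieltjesMeasureOn μ g a b) {X : Set ℝ}
    (hX : X ⊆ Ico a b) : μ X ≠ ⊤ :=
  ne_top_of_le_ne_top hμ.measure_Ico_ne_top (measure_mono hX)

theorem countable_atomsOn (hμ : IsStieltjesMeasureOn μ g a b) :
    (atomsOn μ (Ico a b)).Countable :=
  _root_.countable_atomsOn hμ.measure_Ico_ne_top

theorem measureReal_Ico (hμ : IsStieltjesMeasureOn μ g a b) (hg : MonotoneOn g (Icc a b))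
    (hac : a ≤ c) (hcd : c ≤ d) (hdb : d ≤ b) : μ.real (Ico c d) = g d - g c := by
  rw [measureReal_def, hμ c d hac hcd hdb, ENNReal.toReal_ofReal]
  exact sub_nonneg.2 (hg ⟨hac, hcd.trans hdb⟩ ⟨hac.trans hcd, hdb⟩ hcd)

theorem tendsto_nhdsGT (hμ : IsStieltjesMeasureOn μ g a b) (hg : MonotoneOn g (Icc a b))
    (hs : s ∈ Ico a b) : Tendsto g (𝓝[>] s) (𝓝 (g s + μ.real {s})) := by
  have hfin := hμ.measure_ne_top_of_subset (Ico_subset_Ico_left hs.1)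
  have hatom : Tendsto (fun r => μ.real (Ico s r)) (𝓝[>] s) (𝓝 (μ.real {s})) :=
    (ENNReal.tendsto_toReal (ne_top_of_le_ne_top hfin
      (measure_mono (singleton_subset_iff.2 (left_mem_Ico.2 hs.2))))).comp
      (tendsto_measure_Ico_nhdsGT hs.2 hfin)
  refine (hatom.const_add (g s)).congr' ?_
  filter_upwards [Ioo_mem_nhdsGT hs.2] with r hr
  rw [hμ.measureReal_Ico hg hs.1 hr.1.le hr.2.le]
  ring

theorem rjump_eq (hμ : IsStieltjesMeasureOn μ g a b) (hg : MonotoneOn g (Icc a b))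
    (hs : s ∈ Ico a b) : rjump g s = μ.real {s} := by
  rw [rjump, rightLim_eq_of_tendsto (hμ.tendsto_nhdsGT hg hs)]
  ring

theorem jumpPart_eq (hμ : IsStieltjesMeasureOn μ g a b) (hg : MonotoneOn g (Icc a b))
    (htb : t ≤ b) : jumpPart g a t = μ.real (atomsOn μ (Ico a b) ∩ Ico a t) := by
  have hsupp : support ((Ico a t).indicator (rjump g)) ⊆ atomsOn μ (Ico a b) ∩ Ico a t := by
    intro x hx
    have hxt : x ∈ Ico a t := by by_contra h; exact hx (indicator_of_notMem h _)
    have hxb : x ∈ Ico a b := ⟨hxt.1, hxt.2.trans_le htb⟩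
    rw [mem_support, indicator_of_mem hxt, hμ.rjump_eq hg hxb] at hx
    exact ⟨mem_atomsOn_of_measureReal_ne_zero hxb hx, hxt⟩
  rw [jumpPart, ← tsum_subtype_eq_of_support_subset hsupp]
  refine ((hasSum_measureReal_singleton (hμ.countable_atomsOn.mono inter_subset_left)
    (hμ.measure_ne_top_of_subset (inter_subset_left.trans (sep_subset _ _)))).congr_fun
    fun x => ?_).tsum_eq
  rw [indicator_of_mem x.2.2, hμ.rjump_eq hg x.2.1.1]

theorem contPart_eq (hμ : IsStieltjesMeasureOn μ g a b) (hg : MonotoneOn g (Icc a b))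
    (hat : a ≤ t) (htb : t ≤ b) :
    contPart g a t = g a + μ.real (Ico a t \ atomsOn μ (Ico a b)) := by
  have hsplit := measureReal_inter_add_sdiff (μ := μ) (s := Ico a t)
    hμ.countable_atomsOn.measurableSet (hμ.measure_ne_top_of_subset (Ico_subset_Ico_right htb))
  rw [hμ.measureReal_Ico hg le_rfl hat htb, inter_comm] at hsplit
  rw [contPart, hμ.jumpPart_eq hg htb]
  linarith

theorem contPart_sub_contPart (hμ : IsStieltjesMeasureOn μ g a b) (hg : MonotoneOn g (Icc a b))
    (has : a ≤ s) (hst : s ≤ t) (htb : t ≤ b) :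
    contPart g a t - contPart g a s = μ.real (Ico s t \ atomsOn μ (Ico a b)) := by
  have hunion : Ico a t \ atomsOn μ (Ico a b) =
      (Ico a s \ atomsOn μ (Ico a b)) ∪ (Ico s t \ atomsOn μ (Ico a b)) := by
    rw [← union_sdiff_distrib, Ico_union_Ico_eq_Ico has hst]
  rw [hμ.contPart_eq hg (has.trans hst) htb, hμ.contPart_eq hg has (hst.trans htb), hunion,
    measureReal_union (Ico_disjoint_Ico_same.mono sdiff_subset sdiff_subset)
      (measurableSet_Ico.diff hμ.countable_atomsOn.measurableSet)
      (hμ.measure_ne_top_of_subset (sdiff_subset.trans (Ico_subset_Ico_right (hst.trans htb))))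
      (hμ.measure_ne_top_of_subset (sdiff_subset.trans (Ico_subset_Ico has htb)))]
  ring

end IsStieltjesMeasureOn

namespace GLipschitzOn

variable {μ : Measure ℝ} {f g : ℝ → ℝ} {H a b s t : ℝ}

theorem abs_rjump_le_s15 (hf : GLipschitzOn f g H a b) (hH : 0 ≤ H)
    (hμ : IsStieltjesMeasureOn μ g a b) (hg : MonotoneOn g (Icc a b)) (hs : s ∈ Ico a b) :
    |rjump f s| ≤ H * μ.real {s} := by
  have hlim := hμ.tendsto_nhdsGT hg hs
  rw [← rightLim_eq_of_tendsto hlim] at hlim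
  have hfg : ∀ᶠ x in 𝓝[>] s, |f x - f s| ≤ H * |g x - g s| := by
    filter_upwards [Ioo_mem_nhdsGT hs.2] with x hx
    exact hf x ⟨hs.1.trans hx.1.le, hx.2.le⟩ s ⟨hs.1, hs.2.le⟩
  simpa only [hμ.rjump_eq hg hs, abs_of_nonneg measureReal_nonneg] using
    abs_rjump_le_of_eventually_le hH hlim hfg

theorem mem_atomsOn_of_rjump_ne_zero (hf : GLipschitzOn f g H a b) (hH : 0 ≤ H)
    (hμ : IsStieltjesMeasureOn μ g a b) (hg : MonotoneOn g (Icc a b)) (hs : s ∈ Ico a b)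
    (hjump : rjump f s ≠ 0) : s ∈ atomsOn μ (Ico a b) := by
  refine mem_atomsOn_of_measureReal_ne_zero hs fun h0 => hjump ?_
  simpa [h0] using hf.abs_rjump_le_s15 hH hμ hg hs

theorem jumpPart_eq_tsum_indicator (hf : GLipschitzOn f g H a b) (hH : 0 ≤ H)
    (hμ : IsStieltjesMeasureOn μ g a b) (hg : MonotoneOn g (Icc a b))
    (ht : t ∈ Ico a b \ atomsOn μ (Ico a b)) :
    jumpPart f a t =
      ∑' s : atomsOn μ (Ico a b), (Ico (s : ℝ) b).indicator (fun _ => rjump f s) t := by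
  have hsupp : support ((Ico a t).indicator (rjump f)) ⊆ atomsOn μ (Ico a b) := by
    intro x hx
    have hxt : x ∈ Ico a t := by by_contra h; exact hx (indicator_of_notMem h _)
    rw [mem_support, indicator_of_mem hxt] at hx
    exact hf.mem_atomsOn_of_rjump_ne_zero hH hμ hg ⟨hxt.1, hxt.2.trans ht.1.2⟩ hx
  rw [jumpPart, ← tsum_subtype_eq_of_support_subset hsupp]
  refine tsum_congr fun s => ?_
  have hst : (s : ℝ) ≠ t := fun h => ht.2 (h ▸ s.2)
  by_cases hlt : (s : ℝ) < t
  · rw [indicator_of_mem (show (s : ℝ) ∈ Ico a t from ⟨s.2.1.1, hlt⟩),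
      indicator_of_mem (show t ∈ Ico (s : ℝ) b from ⟨hlt.le, ht.1.2⟩)]
  · rw [indicator_of_notMem fun h => hlt h.2,
      indicator_of_notMem fun h => hlt (lt_of_le_of_ne h.1 hst)]

theorem hasSum_rjump_mul_measureReal (hf : GLipschitzOn f g H a b) (hH : 0 ≤ H)
    (hμ : IsStieltjesMeasureOn μ g a b) (hg : MonotoneOn g (Icc a b)) :
    HasSum (fun s : atomsOn μ (Ico a b) =>
        rjump f s * μ.real (Ico (s : ℝ) b \ atomsOn μ (Ico a b)))
      (∫ t in Ico a b \ atomsOn μ (Ico a b), jumpPart f a t ∂μ) := by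
  set D := atomsOn μ (Ico a b)
  have := hμ.countable_atomsOn.to_subtype
  have := isFiniteMeasure_restrict.2 (hμ.measure_ne_top_of_subset (sdiff_subset (t := D)))
  have hsum : Summable fun s : D => rjump f s :=
    ((hasSum_measureReal_singleton hμ.countable_atomsOn
      (hμ.measure_ne_top_of_subset (sep_subset _ _))).summable.mul_left H).of_norm_bounded
      fun s => hf.abs_rjump_le_s15 hH hμ hg s.2.1
  convert hasSum_integral_tsum_indicator_const (ν := μ.restrict (Ico a b \ D))
    (A := fun s : D => Ico (s : ℝ) b) (fun _ => measurableSet_Ico) hsum using 1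
  · funext s
    rw [measureReal_restrict_apply measurableSet_Ico, ← inter_sdiff_assoc,
      inter_eq_left.2 (Ico_subset_Ico_left s.2.1.1)]
  · exact setIntegral_congr_fun (measurableSet_Ico.diff hμ.countable_atomsOn.measurableSet)
      fun t ht => hf.jumpPart_eq_tsum_indicator hH hμ hg ht

end GLipschitzOn

theorem onePoint_error_eq_setIntegral {μ : Measure ℝ} {f g : ℝ → ℝ} {H a b : ℝ} (hab : a ≤ b)
    (hH : 0 ≤ H) (hg : MonotoneOn g (Icc a b)) (hf : GLipschitzOn f g H a b)
    (hμ : IsStieltjesMeasureOn μ g a b) (hfi : IntegrableOn f (Ico a b) μ)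
    (hfCi : IntegrableOn (contPart f a) (Ico a b) μ) :
    contPart f a a * (contPart g a b - contPart g a a)
      + (∑' s : ℝ, (Ico a b).indicator
          (fun u => f u * rjump g u + rjump f u * (contPart g a b - contPart g a u)) s)
      - ∫ x in Ico a b, f x ∂μ
      = ∫ t in Ico a b \ atomsOn μ (Ico a b), (contPart f a a - contPart f a t) ∂μ := by
  set D := atomsOn μ (Ico a b)
  set S := Ico a b \ D
  have hDsub : D ⊆ Ico a b := sep_subset _ _
  have hDm : MeasurableSet D := hμ.countable_atomsOn.measurableSet
  have hatoms : HasSum (fun s : D => f s * rjump g s) (∫ x in D, f x ∂μ) := by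
    refine (hasSum_setIntegral_of_countable hμ.countable_atomsOn (hfi.mono_set hDsub)).congr_fun
      fun s => ?_
    rw [hμ.rjump_eq hg (hDsub s.2), smul_eq_mul, mul_comm]
  have hjumps : HasSum (fun s : D => rjump f s * (contPart g a b - contPart g a s))
      (∫ t in S, jumpPart f a t ∂μ) := by
    refine (hf.hasSum_rjump_mul_measureReal hH hμ hg).congr_fun fun s => ?_
    rw [hμ.contPart_sub_contPart hg s.2.1.1 s.2.1.2.le le_rfl]
  have hsupp : support ((Ico a b).indicator
      (fun u => f u * rjump g u + rjump f u * (contPart g a b - contPart g a u))) ⊆ D := by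
    intro s hs
    have hsI : s ∈ Ico a b := by by_contra h; exact hs (indicator_of_notMem h _)
    by_contra hsD
    have hg0 : rjump g s = 0 := by
      rw [hμ.rjump_eq hg hsI]
      by_contra h
      exact hsD (mem_atomsOn_of_measureReal_ne_zero hsI h)
    have hf0 : rjump f s = 0 := by
      by_contra h
      exact hsD (hf.mem_atomsOn_of_rjump_ne_zero hH hμ hg hsI h)
    exact hs (by rw [indicator_of_mem hsI, hg0, hf0]; ring)
  have hsum : (∑' s : ℝ, (Ico a b).indicator
      (fun u => f u * rjump g u + rjump f u * (contPart g a b - contPart g a u)) s)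
      = ∫ x in D, f x ∂μ + ∫ t in S, jumpPart f a t ∂μ := by
    rw [← tsum_subtype_eq_of_support_subset hsupp]
    exact ((hatoms.add hjumps).congr_fun fun s => indicator_of_mem (hDsub s.2) _).tsum_eq
  have hsplit : ∫ x in D, f x ∂μ + ∫ x in S, f x ∂μ = ∫ x in Ico a b, f x ∂μ := by
    simpa only [inter_eq_right.2 hDsub] using integral_inter_add_sdiff hDm hfi
  have hjumpPart :
      ∫ t in S, jumpPart f a t ∂μ = ∫ t in S, f t ∂μ - ∫ t in S, contPart f a t ∂μ := by
    have hfB : ∀ t, jumpPart f a t = f t - contPart f a t := fun t => by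
      rw [contPart, sub_sub_cancel]
    simp_rw [hfB]
    exact integral_sub (hfi.mono_set sdiff_subset) (hfCi.mono_set sdiff_subset)
  have hS : contPart g a b - contPart g a a = μ.real S :=
    hμ.contPart_sub_contPart hg le_rfl hab le_rfl
  have hconst : IntegrableOn (fun _ => contPart f a a) S μ :=
    integrableOn_const (hμ.measure_ne_top_of_subset sdiff_subset)
  rw [hsum, ← hsplit, hjumpPart, hS, integral_sub hconst (hfCi.mono_set sdiff_subset),
    setIntegral_const, smul_eq_mul]
  ring

theorem corrected_onePoint_rule_error_general
    (a b H : ℝ) (hab : a ≤ b) (hH : 0 < H) (g f : ℝ → ℝ)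
    (hg : MonotoneOn g (Set.Icc a b))
    (hf : GLipschitzOn f g H a b)
    (hfC : ∀ x ∈ Set.Icc a b, ∀ y ∈ Set.Icc a b,
      |contPart f a x - contPart f a y| ≤ H * |x - y|)
    (hgC : ∀ x ∈ Set.Icc a b, ∀ y ∈ Set.Icc a b,
      |contPart g a x - contPart g a y| ≤ H * |x - y|)
    (μ : Measure ℝ)
    (hμ : ∀ c d : ℝ, a ≤ c → c ≤ d → d ≤ b →
      μ (Set.Ico c d) = ENNReal.ofReal (g d - g c))
    (hfi : IntegrableOn f (Set.Ico a b) μ) :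
    |contPart f a a * (contPart g a b - contPart g a a)
      + (∑' s : ℝ, Set.indicator (Set.Ico a b)
          (fun u => f u * rjump g u + rjump f u * (contPart g a b - contPart g a u)) s)
      - ∫ x in Set.Ico a b, f x ∂μ| ≤ H ^ 2 * (b - a) ^ 2 := by
  have hμg : IsStieltjesMeasureOn μ g a b := hμ
  set S := Ico a b \ atomsOn μ (Ico a b)
  have hfCi : IntegrableOn (contPart f a) (Ico a b) μ :=
    (LipschitzOnWith.of_dist_le' (by simpa only [Real.dist_eq] using hfC)).continuousOn
      |>.integrableOn_of_subset_isCompact isCompact_Icc measurableSet_Ico Ico_subset_Icc_self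
        hμg.measure_Ico_ne_top
  have hmass : μ.real S ≤ H * (b - a) := by
    rw [← hμg.contPart_sub_contPart hg le_rfl hab le_rfl, ← abs_of_nonneg (sub_nonneg.2 hab)]
    exact (le_abs_self _).trans (hgC b (right_mem_Icc.2 hab) a (left_mem_Icc.2 hab))
  have hbound : ∀ t ∈ S, ‖contPart f a a - contPart f a t‖ ≤ H * (b - a) := by
    intro t ht
    have htI : t ∈ Icc a b := Ico_subset_Icc_self ht.1
    rw [Real.norm_eq_abs]
    calc _ ≤ H * |a - t| := hfC a (left_mem_Icc.2 hab) t htI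
      _ ≤ H * (b - a) := by
        rw [abs_sub_comm, abs_of_nonneg (sub_nonneg.2 htI.1)]
        gcongr
        exact htI.2
  rw [onePoint_error_eq_setIntegral hab hH.le hg hf hμg hfi hfCi, ← Real.norm_eq_abs]
  calc _ ≤ H * (b - a) * μ.real S :=
        norm_setIntegral_le_of_norm_le_const (hμg.measure_ne_top_of_subset sdiff_subset).lt_top
          hbound
    _ ≤ H * (b - a) * (H * (b - a)) := by gcongr
    _ = H ^ 2 * (b - a) ^ 2 := by ring

/-- Corrected one-point rule. If `g` is left-continuous and increasing,
`f` is `g`-Lipschitz with constant `H`, and `f^C`, `g^C` are Lipschitz with constant `H`,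
then
`|f^C(a)(g^C(b)-g^C(a)) + Σ_{s∈[a,b)}[f(s)Δ⁺g(s) + Δ⁺f(s)(g^C(b)-g^C(s))]
  - ∫_{[a,b)} f dμ_g| ≤ H²(b-a)²`. -/
theorem corrected_onePoint_rule_error
    (a b H : ℝ) (hab : a ≤ b) (hH : 0 < H) (g f : ℝ → ℝ)
    (hg : MonotoneOn g (Set.Icc a b))
    (hglc : LeftContOn g (Set.Ioo a b))
    (hf : GLipschitzOn f g H a b)
    (hfC : ∀ x ∈ Set.Icc a b, ∀ y ∈ Set.Icc a b,
      |contPart f a x - contPart f a y| ≤ H * |x - y|)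
    (hgC : ∀ x ∈ Set.Icc a b, ∀ y ∈ Set.Icc a b,
      |contPart g a x - contPart g a y| ≤ H * |x - y|)
    (μ : Measure ℝ)
    (hμ : ∀ c d : ℝ, a ≤ c → c ≤ d → d ≤ b →
      μ (Set.Ico c d) = ENNReal.ofReal (g d - g c))
    (hfi : IntegrableOn f (Set.Ico a b) μ) :
    |contPart f a a * (contPart g a b - contPart g a a)
      + (∑' s : ℝ, Set.indicator (Set.Ico a b)
          (fun u => f u * rjump g u + rjump f u * (contPart g a b - contPart g a u)) s)
      - ∫ x in Set.Ico a b, f x ∂μ| ≤ H ^ 2 * (b - a) ^ 2 :=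
  corrected_onePoint_rule_error_general a b H hab hH g f hg hf hfC hgC μ hμ hfi
end

section
/- For any real G ≥ 0 and integer n ≥ 0, it holds that 1 + Σ_{k=0}^{n} G(1+G)^k = (1+G)^{n+1}; consequently, if a sequence (e_n) of nonnegative reals satisfies e_{k+1} ≤ (1+G₁+G₂χ_D(t_k)) e_k + τ for all k, where G₁>0, G₂≥0, τ≥0 and χ_D(t_k) ∈ {0,1} equals 1 for at most m indices, then e_{n+1} ≤ (1+G₂)^m (e_0 + τ/G₁) exp((n+1)G₁). -/
/-- For `G ≥ 0`, `1 + Σ_{k=0}^n G(1+G)^k = (1+G)^{n+1}`; consequently, a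
nonnegative sequence satisfying `e_{k+1} ≤ (1+G₁+G₂χ(k)) e_k + τ` with `χ(k) ∈ {0,1}`
equal to `1` for at most `m` indices obeys the discrete Grönwall bound
`e_{n+1} ≤ (1+G₂)^m (e_0 + τ/G₁) exp((n+1)G₁)`. -/
theorem geom_sum_identity_and_discrete_gronwall :
    (∀ G : ℝ, 0 ≤ G → ∀ n : ℕ,
      1 + ∑ k ∈ Finset.range (n + 1), G * (1 + G) ^ k = (1 + G) ^ (n + 1)) ∧
    (∀ (G₁ G₂ τ : ℝ) (e χ : ℕ → ℝ) (m n : ℕ),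
      0 < G₁ → 0 ≤ G₂ → 0 ≤ τ →
      (∀ k, 0 ≤ e k) →
      (∀ k, χ k = 0 ∨ χ k = 1) →
      ((Finset.range (n + 1)).filter (fun k => χ k = 1)).card ≤ m →
      (∀ k, e (k + 1) ≤ (1 + G₁ + G₂ * χ k) * e k + τ) →
      e (n + 1) ≤ (1 + G₂) ^ m * (e 0 + τ / G₁) * Real.exp ((n + 1) * G₁)) := by
  constructor
  · intro G hG n
    induction n with
    | zero => simp
    | succ n ih =>
      rw [Finset.sum_range_succ, ← add_assoc, ih]
      ring
  · intro G₁ G₂ τ e χ m n hG₁ hG₂ hτ he hχ hcard hstep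
    have hτG : 0 ≤ τ / G₁ := div_nonneg hτ hG₁.le
    have hanon : ∀ k, (0:ℝ) ≤ 1 + G₁ + G₂ * χ k := by
      intro k
      rcases hχ k with h | h <;> rw [h] <;> nlinarith
    -- key induction
    have key : ∀ N, e N + τ / G₁ ≤
        (∏ k ∈ Finset.range N, (1 + G₁ + G₂ * χ k)) * (e 0 + τ / G₁) := by
      intro N
      induction N with
      | zero => simp
      | succ N ih =>
        rw [Finset.prod_range_succ]
        have h1 : e (N + 1) + τ / G₁ ≤ (1 + G₁ + G₂ * χ N) * (e N + τ / G₁) := by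
          have := hstep N
          have hτeq : τ = G₁ * (τ / G₁) := by field_simp
          have hχnn : 0 ≤ G₂ * χ N := by
            rcases hχ N with h | h <;> rw [h] <;> nlinarith
          nlinarith [he N]
        calc e (N + 1) + τ / G₁ ≤ (1 + G₁ + G₂ * χ N) * (e N + τ / G₁) := h1
          _ ≤ (1 + G₁ + G₂ * χ N) * ((∏ k ∈ Finset.range N, (1 + G₁ + G₂ * χ k)) * (e 0 + τ / G₁)) := by
              apply mul_le_mul_of_nonneg_left ih (hanon N)
          _ = (∏ k ∈ Finset.range N, (1 + G₁ + G₂ * χ k)) * (1 + G₁ + G₂ * χ N) * (e 0 + τ / G₁) := by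
              ring
    -- bound on the product
    have hexp : (1:ℝ) + G₁ ≤ Real.exp G₁ := by linarith [Real.add_one_le_exp G₁]
    have hprod : (∏ k ∈ Finset.range (n + 1), (1 + G₁ + G₂ * χ k)) ≤
        ∏ k ∈ Finset.range (n + 1),
          ((if χ k = 1 then (1 + G₂) else 1) * Real.exp G₁) := by
      apply Finset.prod_le_prod
      · intro k _; exact hanon k
      · intro k _
        rcases hχ k with h | h
        · have : χ k = 1 → False := by rw [h]; norm_num
          simp [h, this]
          linarith
        · simp [h]
          nlinarith [Real.exp_pos G₁]
    have hsplit : (∏ k ∈ Finset.range (n + 1),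
          ((if χ k = 1 then (1 + G₂) else 1) * Real.exp G₁)) =
        (1 + G₂) ^ (((Finset.range (n + 1)).filter (fun k => χ k = 1)).card)
          * Real.exp G₁ ^ (n + 1) := by
      rw [Finset.prod_mul_distrib, Finset.prod_const, Finset.card_range]
      congr 1
      rw [Finset.prod_ite, Finset.prod_const, Finset.prod_const_one, mul_one]
    have hpowle : (1 + G₂) ^ (((Finset.range (n + 1)).filter (fun k => χ k = 1)).card)
        ≤ (1 + G₂) ^ m := by
      apply pow_le_pow_right₀ (by linarith) hcard
    have hexppow : Real.exp G₁ ^ (n + 1) = Real.exp ((n + 1 : ℕ) * G₁) := by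
      rw [Real.exp_nat_mul]
    have hE0 : 0 ≤ e 0 + τ / G₁ := by linarith [he 0]
    have hfinal : e (n + 1) + τ / G₁ ≤ (1 + G₂) ^ m * Real.exp ((n + 1 : ℕ) * G₁) * (e 0 + τ / G₁) := by
      calc e (n + 1) + τ / G₁ ≤ (∏ k ∈ Finset.range (n + 1), (1 + G₁ + G₂ * χ k)) * (e 0 + τ / G₁) :=
            key (n + 1)
        _ ≤ ((1 + G₂) ^ m * Real.exp G₁ ^ (n + 1)) * (e 0 + τ / G₁) := by
            apply mul_le_mul_of_nonneg_right _ hE0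
            calc (∏ k ∈ Finset.range (n + 1), (1 + G₁ + G₂ * χ k)) ≤ _ := hprod
              _ = _ := hsplit
              _ ≤ (1 + G₂) ^ m * Real.exp G₁ ^ (n + 1) := by
                  apply mul_le_mul_of_nonneg_right hpowle
                  positivity
        _ = (1 + G₂) ^ m * Real.exp ((n + 1 : ℕ) * G₁) * (e 0 + τ / G₁) := by
            rw [hexppow]
    have hcast : ((n:ℝ) + 1) * G₁ = ((n + 1 : ℕ) : ℝ) * G₁ := by push_cast; ring
    rw [hcast]
    linarith [hfinal]
end
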